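/- arXiv:1812.09013 — 6 statements merged into one kernel-verified Lean document; each statement's English description precedes it below -/
import Mathlib

section
/- Let k ≥ 3 and let H be the k-uniform hypergraph with vertex set {1,…,k} and the single edge {1,…,k}. Then a complex number λ is an eigenvalue of the adjacency tensor of H if and only if λ = 0 or λ^k = 1. -/
/-- `lam` is an eigenvalue of the adjacency tensor of the `k`-uniform hypergraph with
vertex type `V` and edge set `E`: there is a nonzero vector `x : V → ℂ` such that for
every vertex `i`, `∑_{e ∈ E, i ∈ e} ∏_{j ∈ e \ {i}} x j = lam * (x i)^(k-1)`. -/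
def IsHypEigenvalue {V : Type*} [Fintype V] [DecidableEq V]
    (E : Finset (Finset V)) (k : ℕ) (lam : ℂ) : Prop :=
  ∃ x : V → ℂ, x ≠ 0 ∧ ∀ i : V,
    ∑ e ∈ E.filter (fun e => i ∈ e), ∏ j ∈ e.erase i, x j = lam * (x i) ^ (k - 1)

/-- For `k ≥ 3`, the eigenvalues of the `k`-uniform hypergraph with vertex set `{1,…,k}`
and the single edge `{1,…,k}` are exactly `λ = 0` and the `λ` with `λ^k = 1`. -/
theorem stmt4 (k : ℕ) (hk : 3 ≤ k) (lam : ℂ) :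
    IsHypEigenvalue ({Finset.univ} : Finset (Finset (Fin k))) k lam ↔
      lam = 0 ∨ lam ^ k = 1 := by
  haveI : NeZero k := ⟨by omega⟩
  constructor
  · rintro ⟨x, hx, hEq⟩
    simp only [Finset.filter_singleton, Finset.mem_univ, if_true,
      Finset.sum_singleton] at hEq
    by_cases hlam : lam = 0
    · exact Or.inl hlam
    · right
      have hall : ∀ i : Fin k, (∏ j, x j) = lam * x i ^ k := by
        intro i
        have h1 : (∏ j ∈ Finset.univ.erase i, x j) * x i = ∏ j, x j :=
          Finset.prod_erase_mul _ _ (Finset.mem_univ i)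
        have h2 : x i ^ (k - 1) * x i = x i ^ k := by
          rw [← pow_succ]; congr 1; omega
        rw [← h1, hEq i, mul_assoc, h2]
      have hP : (∏ j, x j) ≠ 0 := by
        intro h0
        apply hx
        funext i
        have := hall i
        rw [h0] at this
        have : x i ^ k = 0 := by
          rcases mul_eq_zero.mp this.symm with h | h
          · exact absurd h hlam
          · exact h
        exact pow_eq_zero_iff (by omega) |>.mp this
      have hxk : ∀ i : Fin k, x i ^ k = (∏ j, x j) / lam := by
        intro i
        rw [eq_div_iff hlam, mul_comm]
        exact (hall i).symm
      have hprod : (∏ j, x j) ^ k = ((∏ j, x j) / lam) ^ k := by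
        calc (∏ j, x j) ^ k = ∏ i, x i ^ k := (Finset.prod_pow _ _ _).symm
        _ = ∏ _i : Fin k, ((∏ j, x j) / lam) := by
            exact Finset.prod_congr rfl fun i _ => hxk i
        _ = ((∏ j, x j) / lam) ^ k := by
            rw [Finset.prod_const, Finset.card_univ, Fintype.card_fin]
      have hPk : (∏ j, x j) ^ k ≠ 0 := pow_ne_zero _ hP
      rw [div_pow] at hprod
      have h3 : (∏ j, x j) ^ k = (∏ j, x j) ^ k * lam ^ k :=
        (div_eq_iff (pow_ne_zero k hlam)).mp hprod.symm
      exact (mul_left_cancel₀ hPk (((mul_one _).trans h3))).symm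
  · rintro (rfl | hlam)
    · -- lam = 0
      refine ⟨fun j => if j = 0 then 1 else 0, ?_, ?_⟩
      · intro h
        have := congrFun h 0
        simp at this
      · intro i
        simp only [Finset.filter_singleton, Finset.mem_univ, if_true,
          Finset.sum_singleton, zero_mul]
        have hcard : 1 ≤ ((Finset.univ.erase i).erase (0 : Fin k)).card := by
          have h1 : (Finset.univ : Finset (Fin k)).card - 1
              ≤ (Finset.univ.erase i).card := Finset.pred_card_le_card_erase
          have h2 : (Finset.univ.erase i).card - 1
              ≤ ((Finset.univ.erase i).erase (0 : Fin k)).card :=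
            Finset.pred_card_le_card_erase
          simp only [Finset.card_univ, Fintype.card_fin] at h1
          omega
        have hpos : 0 < ((Finset.univ.erase i).erase (0 : Fin k)).card := hcard
        obtain ⟨j, hj⟩ := Finset.card_pos.mp hpos
        have hj0 : j ≠ 0 := Finset.ne_of_mem_erase hj
        have hji : j ∈ Finset.univ.erase i := Finset.mem_of_mem_erase hj
        apply Finset.prod_eq_zero hji
        simp [hj0]
    · -- lam ^ k = 1
      have hlam0 : lam ≠ 0 := by
        intro h; rw [h] at hlam; simp [zero_pow (by omega : k ≠ 0)] at hlam
      refine ⟨fun j => if j = 0 then lam else 1, ?_, ?_⟩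
      · intro h
        have := congrFun h 0
        simp at this
        exact hlam0 this
      · intro i
        simp only [Finset.filter_singleton, Finset.mem_univ, if_true,
          Finset.sum_singleton]
        by_cases hi : i = (0 : Fin k)
        · subst hi
          have h1 : ∏ j ∈ Finset.univ.erase (0 : Fin k),
              (if j = (0 : Fin k) then lam else (1 : ℂ)) = 1 := by
            apply Finset.prod_eq_one
            intro j hj
            simp [Finset.ne_of_mem_erase hj]
          rw [h1]
          simp only [if_true]
          have : lam * lam ^ (k - 1) = lam ^ k := by
            rw [← pow_succ']; congr 1; omega
          rw [this, hlam]
        · have h0mem : (0 : Fin k) ∈ Finset.univ.erase i := by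
            simp [Ne.symm hi]
          rw [← Finset.mul_prod_erase _ _ h0mem]
          have h1 : ∏ j ∈ (Finset.univ.erase i).erase (0 : Fin k),
              (if j = (0 : Fin k) then lam else (1 : ℂ)) = 1 := by
            apply Finset.prod_eq_one
            intro j hj
            simp [Finset.ne_of_mem_erase hj]
          rw [h1]
          simp [hi]
end

section
/- Let k ≥ 2 and λ ∈ ℂ with λ ≠ 0, and suppose p = (p_1, …, p_{k−1}) ∈ ℂ^{k−1} satisfies λ·p_i^{k−1} = ∏_{j ∈ {1,…,k−1}, j ≠ i} p_j for every i ∈ {1,…,k−1}. Then either p_1·p_2⋯p_{k−1} = 0 or p_1·p_2⋯p_{k−1} = λ^{−(k−1)}; moreover, if p ≠ 0 then λ·p_1^k = λ·p_2^k = ⋯ = λ·p_{k−1}^k = p_1·p_2⋯p_{k−1} = λ^{−(k−1)} ≠ 0. -/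
/-- Key intermediate claim for the one-edge `k`-uniform hypergraph: if `λ ≠ 0` and
`p = (p_1, …, p_{k-1})` satisfies `λ p_i^{k-1} = ∏_{j ≠ i} p_j` for all `i`, then the
product `p_1 ⋯ p_{k-1}` is `0` or `λ^{-(k-1)}`; and if `p ≠ 0` then
`λ p_1^k = ⋯ = λ p_{k-1}^k = p_1 ⋯ p_{k-1} = λ^{-(k-1)} ≠ 0`. -/
theorem stmt5 (k : ℕ) (hk : 2 ≤ k) (lam : ℂ) (hl : lam ≠ 0) (p : Fin (k - 1) → ℂ)
    (hp : ∀ i, lam * (p i) ^ (k - 1) = ∏ j ∈ Finset.univ.erase i, p j) :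
    ((∏ j, p j = 0) ∨ (∏ j, p j = (lam ^ (k - 1))⁻¹)) ∧
      (p ≠ 0 →
        (∀ i, lam * (p i) ^ k = ∏ j, p j) ∧
        (∏ j, p j = (lam ^ (k - 1))⁻¹) ∧ (∏ j, p j ≠ 0)) := by
  have hkk : k = (k - 1) + 1 := by omega
  have hn : k - 1 ≠ 0 := by omega
  set P := ∏ j, p j with hP
  have key : ∀ i, lam * (p i) ^ k = P := by
    intro i
    rw [hP, ← Finset.mul_prod_erase Finset.univ p (Finset.mem_univ i), ← hp i]
    conv_lhs => rw [hkk]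
    rw [pow_succ]
    ring
  have h2 : ∏ i, (lam * (p i) ^ k) = P ^ (k - 1) := by
    simp [key, Finset.prod_const]
  have h3 : lam ^ (k - 1) * P ^ k = P ^ (k - 1) := by
    rw [← h2, Finset.prod_mul_distrib, Finset.prod_const, hP, ← Finset.prod_pow]
    simp
  have hPk : P ^ k = P ^ (k - 1) * P := by rw [← pow_succ, ← hkk]
  have h4 : P ^ (k - 1) * (lam ^ (k - 1) * P - 1) = 0 := by
    linear_combination h3 - lam ^ (k - 1) * hPk
  have hdisj : P = 0 ∨ P = (lam ^ (k - 1))⁻¹ := by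
    rcases mul_eq_zero.mp h4 with h | h
    · exact Or.inl (pow_eq_zero_iff hn |>.mp h)
    · exact Or.inr (inv_eq_of_mul_eq_one_right (sub_eq_zero.mp h)).symm
  refine ⟨hdisj, fun hp0 => ?_⟩
  obtain ⟨i, hi⟩ := Function.ne_iff.mp hp0
  have hPne : P ≠ 0 := by
    rw [← key i]
    exact mul_ne_zero hl (pow_ne_zero _ hi)
  rcases hdisj with h | h
  · exact absurd h hPne
  · exact ⟨key, h, hPne⟩
end

section
/- Let k ≥ 3, m ≥ 1 and t ∈ {1,…,m+1}. Then the nonnegative real number (4·cos²(π·t/(m+2)))^{1/k} is an eigenvalue of the adjacency tensor of the k-uniform hyperpath P_m^{(k)}. -/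
/-- The edge set of the `k`-uniform hyperpath `P_m^{(k)}` on vertex set
`{0, 1, …, m(k-1)}`: the edges are `e_s = {s(k-1), s(k-1)+1, …, (s+1)(k-1)}`
for `s = 0, 1, …, m-1`. -/
def hyperpathEdges (k m : ℕ) : Finset (Finset (Fin (m * (k - 1) + 1))) :=
  (Finset.range m).image fun s =>
    Finset.univ.filter fun i => s * (k - 1) ≤ (i : ℕ) ∧ (i : ℕ) ≤ (s + 1) * (k - 1)

namespace Stmt7Aux

lemma prod_except_one {α : Type*} [DecidableEq α] (T : Finset α) (u : α) (hu : u ∈ T)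
    (x : α → ℂ) (c : ℂ) (h : ∀ j ∈ T, j ≠ u → x j = c) :
    ∏ j ∈ T, x j = x u * c ^ (T.card - 1) := by
  rw [← Finset.mul_prod_erase T x hu]
  congr 1
  rw [Finset.prod_congr rfl (fun j hj => h j (Finset.mem_of_mem_erase hj)
      (Finset.ne_of_mem_erase hj)), Finset.prod_const, Finset.card_erase_of_mem hu]

lemma prod_except_two {α : Type*} [DecidableEq α] (T : Finset α) (u w : α) (hu : u ∈ T)
    (hw : w ∈ T) (huw : u ≠ w) (x : α → ℂ) (c : ℂ)
    (h : ∀ j ∈ T, j ≠ u → j ≠ w → x j = c) :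
    ∏ j ∈ T, x j = x u * (x w * c ^ (T.card - 2)) := by
  rw [← Finset.mul_prod_erase T x hu]
  congr 1
  have hw' : w ∈ T.erase u := Finset.mem_erase.2 ⟨fun h' => huw h'.symm, hw⟩
  rw [prod_except_one _ w hw' x c (fun j hj hjw =>
      h j (Finset.mem_of_mem_erase hj) (Finset.ne_of_mem_erase hj) hjw),
    Finset.card_erase_of_mem hu]
  congr 2

/-- The `s`-th edge of the hyperpath. -/
def edge (k m s : ℕ) : Finset (Fin (m * (k - 1) + 1)) :=
  Finset.univ.filter fun i => s * (k - 1) ≤ (i : ℕ) ∧ (i : ℕ) ≤ (s + 1) * (k - 1)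

lemma mem_edge {k m s : ℕ} {i : Fin (m * (k - 1) + 1)} :
    i ∈ edge k m s ↔ s * (k - 1) ≤ (i : ℕ) ∧ (i : ℕ) ≤ s * (k - 1) + (k - 1) := by
  simp [edge, Nat.succ_mul]

lemma hyperpathEdges_eq (k m : ℕ) :
    hyperpathEdges k m = (Finset.range m).image (edge k m) := rfl

lemma card_edge {k m s : ℕ} (hk : 3 ≤ k) (hs : s < m) : (edge k m s).card = k := by
  have hb : ∀ j ∈ Finset.Icc (s * (k-1)) (s * (k-1) + (k-1)), j < m * (k-1) + 1 := by
    intro j hj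
    rw [Finset.mem_Icc] at hj
    have h1 : (s+1) * (k-1) ≤ m * (k-1) := Nat.mul_le_mul_right _ (Nat.succ_le_of_lt hs)
    rw [Nat.succ_mul] at h1
    omega
  have he : edge k m s = Finset.attachFin (Finset.Icc (s * (k-1)) (s * (k-1) + (k-1))) hb := by
    ext j
    simp [mem_edge, Finset.mem_Icc]
  rw [he, Finset.card_attachFin, Nat.card_Icc]
  omega

lemma edge_injOn {k m : ℕ} (hk : 3 ≤ k) {s s' : ℕ} (hs : s < m) (hs' : s' < m)
    (h : edge k m s = edge k m s') : s = s' := by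
  have hK : 0 < k - 1 := by omega
  have hv : ∀ u : ℕ, u < m → u * (k-1) < m * (k-1) + 1 := by
    intro u hu
    have := Nat.mul_le_mul_right (k-1) (le_of_lt hu)
    omega
  have h1 : (⟨s * (k-1), hv s hs⟩ : Fin (m*(k-1)+1)) ∈ edge k m s :=
    mem_edge.2 ⟨le_rfl, Nat.le_add_right _ _⟩
  have h2 : (⟨s' * (k-1), hv s' hs'⟩ : Fin (m*(k-1)+1)) ∈ edge k m s' :=
    mem_edge.2 ⟨le_rfl, Nat.le_add_right _ _⟩
  rw [h] at h1; rw [← h] at h2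
  rw [mem_edge] at h1 h2
  exact Nat.eq_of_mul_eq_mul_right hK (le_antisymm h2.1 h1.1)

lemma sum_edges {k m : ℕ} (hk : 3 ≤ k) (x : Fin (m * (k - 1) + 1) → ℂ)
    (i : Fin (m * (k - 1) + 1)) :
    ∑ e ∈ (hyperpathEdges k m).filter (fun e => i ∈ e), ∏ j ∈ e.erase i, x j
      = ∑ s ∈ (Finset.range m).filter (fun s => i ∈ edge k m s),
          ∏ j ∈ (edge k m s).erase i, x j := by
  rw [hyperpathEdges_eq, Finset.filter_image, Finset.sum_image]
  intro s hs s' hs' h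
  exact edge_injOn hk (Finset.mem_range.1 (Finset.mem_of_mem_filter _ hs))
    (Finset.mem_range.1 (Finset.mem_of_mem_filter _ hs')) h

end Stmt7Aux

namespace Stmt7Aux

section
variable {k m : ℕ}

lemma filter_of_interior (hk : 3 ≤ k) {i : Fin (m * (k - 1) + 1)}
    (hr : (i : ℕ) % (k - 1) ≠ 0) :
    (Finset.range m).filter (fun s => i ∈ edge k m s) = {(i : ℕ) / (k - 1)} := by
  have hK : 0 < k - 1 := by omega
  ext s
  simp only [Finset.mem_filter, Finset.mem_range, mem_edge, Finset.mem_singleton]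
  constructor
  · rintro ⟨hs, h1, h2⟩
    have hne : (i : ℕ) ≠ s * (k - 1) + (k - 1) := by
      intro he
      apply hr
      rw [he, ← Nat.succ_mul]
      exact Nat.mul_mod_left _ _
    exact (Nat.div_eq_of_lt_le h1 (by rw [Nat.succ_mul]; omega)).symm
  · rintro rfl
    have e1 := Nat.div_add_mod (i : ℕ) (k - 1)
    have e2 : (i : ℕ) % (k - 1) < k - 1 := Nat.mod_lt _ hK
    have e3 : (k - 1) * ((i : ℕ) / (k - 1)) = ((i : ℕ) / (k - 1)) * (k - 1) :=
      Nat.mul_comm _ _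
    have hlt := i.isLt
    refine ⟨?_, by omega, by omega⟩
    by_contra hq
    push_neg at hq
    have := Nat.mul_le_mul_right (k - 1) hq
    omega

lemma q_lt_m_of_mod_ne (hk : 3 ≤ k) {i : Fin (m * (k - 1) + 1)}
    (hr : (i : ℕ) % (k - 1) ≠ 0) : (i : ℕ) / (k - 1) < m := by
  have hK : 0 < k - 1 := by omega
  have e1 := Nat.div_add_mod (i : ℕ) (k - 1)
  have e2 : (i : ℕ) % (k - 1) < k - 1 := Nat.mod_lt _ hK
  have hlt := i.isLt
  by_contra hq
  push_neg at hq
  have h2 := Nat.mul_le_mul_right (k - 1) hq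
  have e3 : (k - 1) * ((i : ℕ) / (k - 1)) = ((i : ℕ) / (k - 1)) * (k - 1) := Nat.mul_comm _ _
  omega

lemma mem_filter_joint (hk : 3 ≤ k) {i : Fin (m * (k - 1) + 1)} {s : ℕ}
    (hr : (i : ℕ) % (k - 1) = 0) :
    (s ∈ (Finset.range m).filter (fun s => i ∈ edge k m s)) ↔
      (s < m ∧ s ≤ (i : ℕ) / (k - 1) ∧ (i : ℕ) / (k - 1) ≤ s + 1) := by
  have hK : 0 < k - 1 := by omega
  have hmul : ∀ a b : ℕ, a * (k - 1) ≤ b * (k - 1) ↔ a ≤ b := by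
    intro a b
    constructor
    · intro h
      by_contra hab
      push_neg at hab
      have h2 := Nat.mul_le_mul_right (k - 1) hab
      rw [Nat.succ_mul] at h2
      omega
    · exact fun h => Nat.mul_le_mul_right _ h
  have ei : (i : ℕ) = ((i : ℕ) / (k - 1)) * (k - 1) := by
    have e1 := Nat.div_add_mod (i : ℕ) (k - 1)
    have e3 : (k - 1) * ((i : ℕ) / (k - 1)) = ((i : ℕ) / (k - 1)) * (k - 1) := Nat.mul_comm _ _
    omega
  simp only [Finset.mem_filter, Finset.mem_range, mem_edge]
  rw [← Nat.succ_mul]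
  constructor
  · rintro ⟨hs, h1, h2⟩
    rw [ei] at h1 h2
    exact ⟨hs, (hmul _ _).1 h1, (hmul _ _).1 h2⟩
  · rintro ⟨hs, h1, h2⟩
    rw [ei]
    exact ⟨hs, (hmul _ _).2 h1, (hmul _ _).2 h2⟩

lemma filter_joint0 (hk : 3 ≤ k) (hm : 1 ≤ m) {i : Fin (m * (k - 1) + 1)}
    (hr : (i : ℕ) % (k - 1) = 0) (hq : (i : ℕ) / (k - 1) = 0) :
    (Finset.range m).filter (fun s => i ∈ edge k m s) = {0} := by
  ext s
  rw [mem_filter_joint hk hr, hq, Finset.mem_singleton]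
  omega

lemma filter_jointm (hk : 3 ≤ k) (hm : 1 ≤ m) {i : Fin (m * (k - 1) + 1)}
    (hr : (i : ℕ) % (k - 1) = 0) (hq : (i : ℕ) / (k - 1) = m) :
    (Finset.range m).filter (fun s => i ∈ edge k m s) = {m - 1} := by
  ext s
  rw [mem_filter_joint hk hr, hq, Finset.mem_singleton]
  omega

lemma filter_jointmid (hk : 3 ≤ k) {i : Fin (m * (k - 1) + 1)}
    (hr : (i : ℕ) % (k - 1) = 0) (hq1 : 1 ≤ (i : ℕ) / (k - 1))
    (hq2 : (i : ℕ) / (k - 1) < m) :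
    (Finset.range m).filter (fun s => i ∈ edge k m s)
      = {(i : ℕ) / (k - 1) - 1, (i : ℕ) / (k - 1)} := by
  ext s
  rw [mem_filter_joint hk hr, Finset.mem_insert, Finset.mem_singleton]
  omega

/-- The eigenvector. -/
noncomputable def xvec (k m : ℕ) (a y : ℕ → ℂ) : Fin (m * (k - 1) + 1) → ℂ :=
  fun i => if (k - 1) ∣ (i : ℕ) then a ((i : ℕ) / (k - 1)) else y ((i : ℕ) / (k - 1))

lemma xvec_joint {a y : ℕ → ℂ} {j : Fin (m * (k - 1) + 1)} (hj : (j : ℕ) % (k - 1) = 0) :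
    xvec k m a y j = a ((j : ℕ) / (k - 1)) :=
  if_pos (Nat.dvd_of_mod_eq_zero hj)

lemma xvec_int {a y : ℕ → ℂ} {j : Fin (m * (k - 1) + 1)} (hj : (j : ℕ) % (k - 1) ≠ 0) :
    xvec k m a y j = y ((j : ℕ) / (k - 1)) :=
  if_neg (fun hd => hj (Nat.eq_zero_of_dvd_of_lt hd |> fun _ => Nat.mod_eq_zero_of_dvd hd))

lemma xvec_strict_interior (hk : 3 ≤ k) {a y : ℕ → ℂ} {s : ℕ} {j : Fin (m * (k - 1) + 1)}
    (h1 : s * (k - 1) < (j : ℕ)) (h2 : (j : ℕ) < s * (k - 1) + (k - 1)) :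
    xvec k m a y j = y s := by
  have hK : 0 < k - 1 := by omega
  have hdiv : (j : ℕ) / (k - 1) = s :=
    Nat.div_eq_of_lt_le (le_of_lt h1) (by rw [Nat.succ_mul]; exact h2)
  have hmod : (j : ℕ) % (k - 1) ≠ 0 := by
    intro h
    have e1 := Nat.div_add_mod (j : ℕ) (k - 1)
    rw [hdiv, h, Nat.mul_comm] at e1
    omega
  rw [xvec_int hmod, hdiv]

lemma bound_right {s : ℕ} (hk : 3 ≤ k) (hs : s < m) :
    s * (k - 1) + (k - 1) < m * (k - 1) + 1 := by
  have h1 : (s + 1) * (k - 1) ≤ m * (k - 1) := Nat.mul_le_mul_right _ (Nat.succ_le_of_lt hs)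
  rw [Nat.succ_mul] at h1
  omega

lemma prod_left {a y : ℕ → ℂ} {s : ℕ} (hk : 3 ≤ k) (hs : s < m)
    {i : Fin (m * (k - 1) + 1)} (hi : (i : ℕ) = s * (k - 1)) :
    ∏ j ∈ (edge k m s).erase i, xvec k m a y j = a (s + 1) * y s ^ (k - 2) := by
  have hK : 0 < k - 1 := by omega
  set w : Fin (m * (k - 1) + 1) := ⟨s * (k - 1) + (k - 1), bound_right hk hs⟩ with hw
  have hwv : (w : ℕ) = s * (k - 1) + (k - 1) := rfl
  have hwmem : w ∈ (edge k m s).erase i := by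
    rw [Finset.mem_erase, mem_edge]
    refine ⟨fun h => ?_, Nat.le_add_right _ _, le_rfl⟩
    rw [Fin.ext_iff, hwv, hi] at h
    omega
  have himem : i ∈ edge k m s := mem_edge.2 ⟨by omega, by omega⟩
  rw [prod_except_one _ w hwmem _ (y s) ?_]
  · have hxw : xvec k m a y w = a (s + 1) := by
      rw [xvec_joint (by rw [hwv, ← Nat.succ_mul]; exact Nat.mul_mod_left _ _)]
      congr 1
      rw [hwv, ← Nat.succ_mul]
      exact Nat.mul_div_cancel _ hK
    rw [hxw, Finset.card_erase_of_mem himem, card_edge hk hs]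
    congr 2
  · intro j hj hjw
    rw [Finset.mem_erase, mem_edge] at hj
    have hji : (j : ℕ) ≠ s * (k - 1) := by
      intro h
      exact hj.1 (Fin.ext (h.trans hi.symm))
    have hjw' : (j : ℕ) ≠ s * (k - 1) + (k - 1) := fun h => hjw (Fin.ext h)
    exact xvec_strict_interior hk (by omega) (by omega)

lemma prod_right {a y : ℕ → ℂ} {s : ℕ} (hk : 3 ≤ k) (hs : s < m)
    {i : Fin (m * (k - 1) + 1)} (hi : (i : ℕ) = s * (k - 1) + (k - 1)) :
    ∏ j ∈ (edge k m s).erase i, xvec k m a y j = a s * y s ^ (k - 2) := by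
  have hK : 0 < k - 1 := by omega
  set u : Fin (m * (k - 1) + 1) := ⟨s * (k - 1), by have := bound_right hk hs; omega⟩ with hu
  have huv : (u : ℕ) = s * (k - 1) := rfl
  have humem : u ∈ (edge k m s).erase i := by
    rw [Finset.mem_erase, mem_edge]
    refine ⟨fun h => ?_, le_rfl, Nat.le_add_right _ _⟩
    rw [Fin.ext_iff, huv, hi] at h
    omega
  have himem : i ∈ edge k m s := mem_edge.2 ⟨by omega, by omega⟩
  rw [prod_except_one _ u humem _ (y s) ?_]
  · have hxu : xvec k m a y u = a s := by
      rw [xvec_joint (by rw [huv]; exact Nat.mul_mod_left _ _)]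
      congr 1
      rw [huv]
      exact Nat.mul_div_cancel _ hK
    rw [hxu, Finset.card_erase_of_mem himem, card_edge hk hs]
    congr 2
  · intro j hj hju
    rw [Finset.mem_erase, mem_edge] at hj
    have hji : (j : ℕ) ≠ s * (k - 1) + (k - 1) := by
      intro h
      exact hj.1 (Fin.ext (h.trans hi.symm))
    have hju' : (j : ℕ) ≠ s * (k - 1) := fun h => hju (Fin.ext h)
    exact xvec_strict_interior hk (by omega) (by omega)

lemma prod_interior {a y : ℕ → ℂ} {s : ℕ} (hk : 3 ≤ k) (hs : s < m)
    {i : Fin (m * (k - 1) + 1)} (hlo : s * (k - 1) < (i : ℕ))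
    (hhi : (i : ℕ) < s * (k - 1) + (k - 1)) :
    ∏ j ∈ (edge k m s).erase i, xvec k m a y j
      = a s * (a (s + 1) * y s ^ (k - 3)) := by
  have hK : 0 < k - 1 := by omega
  set u : Fin (m * (k - 1) + 1) := ⟨s * (k - 1), by have := bound_right hk hs; omega⟩ with hu
  set w : Fin (m * (k - 1) + 1) := ⟨s * (k - 1) + (k - 1), bound_right hk hs⟩ with hw
  have huv : (u : ℕ) = s * (k - 1) := rfl
  have hwv : (w : ℕ) = s * (k - 1) + (k - 1) := rfl
  have humem : u ∈ (edge k m s).erase i := by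
    rw [Finset.mem_erase, mem_edge]
    exact ⟨fun h => by rw [Fin.ext_iff, huv] at h; omega, le_rfl, Nat.le_add_right _ _⟩
  have hwmem : w ∈ (edge k m s).erase i := by
    rw [Finset.mem_erase, mem_edge]
    exact ⟨fun h => by rw [Fin.ext_iff, hwv] at h; omega, Nat.le_add_right _ _, le_rfl⟩
  have huw : u ≠ w :=
    Fin.ne_of_val_ne (show s * (k - 1) ≠ s * (k - 1) + (k - 1) by omega)
  have himem : i ∈ edge k m s := mem_edge.2 ⟨by omega, by omega⟩
  rw [prod_except_two _ u w humem hwmem huw _ (y s) ?_]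
  · have hxu : xvec k m a y u = a s := by
      rw [xvec_joint (by rw [huv]; exact Nat.mul_mod_left _ _)]
      congr 1
      rw [huv]
      exact Nat.mul_div_cancel _ hK
    have hxw : xvec k m a y w = a (s + 1) := by
      rw [xvec_joint (by rw [hwv, ← Nat.succ_mul]; exact Nat.mul_mod_left _ _)]
      congr 1
      rw [hwv, ← Nat.succ_mul]
      exact Nat.mul_div_cancel _ hK
    rw [hxu, hxw, Finset.card_erase_of_mem himem, card_edge hk hs]
    congr 3
  · intro j hj hju hjw
    rw [Finset.mem_erase, mem_edge] at hj
    have h1 : (j : ℕ) ≠ s * (k - 1) := fun h => hju (Fin.ext h)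
    have h2 : (j : ℕ) ≠ s * (k - 1) + (k - 1) := fun h => hjw (Fin.ext h)
    exact xvec_strict_interior hk (by omega) (by omega)

end
end Stmt7Aux

namespace Stmt7Aux

lemma key0 {k m : ℕ} (hk : 3 ≤ k) (hm : 1 ≤ m) :
    IsHypEigenvalue (hyperpathEdges k m) k 0 := by
  have hK : 0 < k - 1 := by omega
  refine ⟨fun i => if (i : ℕ) = 0 then 1 else 0, ?_, ?_⟩
  · intro h
    have h0 := congrFun h ⟨0, by omega⟩
    simp at h0
  · intro i
    rw [zero_mul]
    apply Finset.sum_eq_zero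
    intro e he
    rw [Finset.mem_filter, hyperpathEdges_eq] at he
    obtain ⟨hee, hie⟩ := he
    rw [Finset.mem_image] at hee
    obtain ⟨s, hs, rfl⟩ := hee
    rw [Finset.mem_range] at hs
    by_cases hiw : (i : ℕ) = s * (k - 1) + (k - 1)
    · refine Finset.prod_eq_zero
        (i := (⟨s * (k - 1) + 1, by have := bound_right hk hs; omega⟩ : Fin _)) ?_ ?_
      · rw [Finset.mem_erase]
        refine ⟨Fin.ne_of_val_ne (show s * (k - 1) + 1 ≠ (i : ℕ) by omega), ?_⟩
        show _ ∈ edge k m s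
        rw [mem_edge]
        refine ⟨?_, ?_⟩
        · show s * (k - 1) ≤ s * (k - 1) + 1
          omega
        · show s * (k - 1) + 1 ≤ s * (k - 1) + (k - 1)
          omega
      · simp
    · refine Finset.prod_eq_zero
        (i := (⟨s * (k - 1) + (k - 1), bound_right hk hs⟩ : Fin _)) ?_ ?_
      · rw [Finset.mem_erase]
        refine ⟨Fin.ne_of_val_ne (show s * (k - 1) + (k - 1) ≠ (i : ℕ) by omega), ?_⟩
        show _ ∈ edge k m s
        rw [mem_edge]
        exact ⟨Nat.le_add_right _ _, le_rfl⟩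
      · simp
        omega

lemma key {k m : ℕ} (hk : 3 ≤ k) (hm : 1 ≤ m) (lam μ : ℝ)
    (hlam : lam ≠ 0) (hμ : μ ≠ 0)
    (v : ℕ → ℝ) (a y : ℕ → ℂ)
    (hv0 : v 0 ≠ 0)
    (hrec0 : v 1 = μ * v 0)
    (hrec : ∀ s, v s + v (s + 2) = μ * v (s + 1))
    (hvm : v (m + 1) = 0)
    (P1 : ∀ s, a s ^ k = ((v s : ℝ) : ℂ) ^ 2)
    (P2 : ∀ s, a s * (a (s + 1) * y s ^ (k - 3)) = (lam : ℂ) * y s ^ (k - 1))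
    (P3 : ∀ s, (μ : ℂ) * (a s * (a (s + 1) * y s ^ (k - 2)))
        = (lam : ℂ) * ((v s : ℝ) : ℂ) * ((v (s + 1) : ℝ) : ℂ))
    (P4 : ∀ s, v s * v (s + 1) = 0 → y s = 0) :
    IsHypEigenvalue (hyperpathEdges k m) k (lam : ℂ) := by
  have hK : 0 < k - 1 := by omega
  have hkne : k ≠ 0 := by omega
  have hA : ∀ s, v s = 0 → a s = 0 := by
    intro s h
    have h1 := P1 s
    rw [h] at h1
    simp only [Complex.ofReal_zero, zero_pow (two_ne_zero)] at h1
    exact pow_eq_zero_iff hkne |>.1 h1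
  have hAne : ∀ s, v s ≠ 0 → a s ≠ 0 := by
    intro s h ha
    apply h
    have h1 := P1 s
    rw [ha, zero_pow hkne] at h1
    have h2 : ((v s : ℝ) : ℂ) = 0 := (pow_eq_zero_iff (two_ne_zero)).1 h1.symm
    exact_mod_cast h2
  have hμC : (μ : ℂ) ≠ 0 := Complex.ofReal_ne_zero.2 hμ
  have hpow : ∀ z : ℂ, z ^ k = z ^ (k - 1) * z := by
    intro z
    conv_lhs => rw [show k = (k - 1) + 1 by omega]
    rw [pow_succ]
  have joint0 : a 1 * y 0 ^ (k - 2) = (lam : ℂ) * a 0 ^ (k - 1) := by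
    have ha0 := hAne 0 hv0
    apply mul_left_cancel₀ (mul_ne_zero hμC ha0)
    have e3 := P3 0
    have e1 := P1 0
    have er : ((v 1 : ℝ) : ℂ) = (μ : ℂ) * ((v 0 : ℝ) : ℂ) := by exact_mod_cast hrec0
    have hp := hpow (a 0)
    linear_combination e3 + (lam : ℂ) * ((v 0 : ℝ) : ℂ) * er - (lam : ℂ) * (μ : ℂ) * e1
      + (lam : ℂ) * (μ : ℂ) * hp
  have jointm : a (m - 1) * y (m - 1) ^ (k - 2) = (lam : ℂ) * a m ^ (k - 1) := by
    have hm1 : m - 1 + 1 = m := by omega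
    have hm2 : m - 1 + 2 = m + 1 := by omega
    by_cases hvmm : v m = 0
    · have hy1 : y (m - 1) = 0 := P4 (m - 1) (by rw [hm1, hvmm, mul_zero])
      rw [hy1, hA m hvmm, zero_pow (show k - 2 ≠ 0 by omega),
        zero_pow (show k - 1 ≠ 0 by omega), mul_zero, mul_zero]
    · have ham := hAne m hvmm
      apply mul_left_cancel₀ (mul_ne_zero hμC ham)
      have e3 := P3 (m - 1)
      rw [hm1] at e3
      have e1 := P1 m
      have hrr : v (m - 1) = μ * v m := by
        have h := hrec (m - 1)
        rw [hm1, hm2, hvm] at h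
        linarith
      have er : ((v (m - 1) : ℝ) : ℂ) = (μ : ℂ) * ((v m : ℝ) : ℂ) := by exact_mod_cast hrr
      have hp := hpow (a m)
      linear_combination e3 + (lam : ℂ) * ((v m : ℝ) : ℂ) * er - (lam : ℂ) * (μ : ℂ) * e1
        + (lam : ℂ) * (μ : ℂ) * hp
  have jointmid : ∀ q, 1 ≤ q → q < m →
      a (q - 1) * y (q - 1) ^ (k - 2) + a (q + 1) * y q ^ (k - 2)
        = (lam : ℂ) * a q ^ (k - 1) := by
    intro q hq1 hq2
    have hq1' : q - 1 + 1 = q := by omega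
    have hq2' : q - 1 + 2 = q + 1 := by omega
    by_cases hvq : v q = 0
    · have hy1 : y (q - 1) = 0 := P4 (q - 1) (by rw [hq1', hvq, mul_zero])
      have hy2 : y q = 0 := P4 q (by rw [hvq, zero_mul])
      rw [hy1, hy2, hA q hvq, zero_pow (show k - 2 ≠ 0 by omega),
        zero_pow (show k - 1 ≠ 0 by omega), mul_zero, mul_zero, mul_zero, add_zero]
    · have haq := hAne q hvq
      apply mul_left_cancel₀ (mul_ne_zero hμC haq)
      have e3a := P3 (q - 1)
      rw [hq1'] at e3a
      have e3b := P3 q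
      have e1 := P1 q
      have hrr : v (q - 1) + v (q + 1) = μ * v q := by
        have h := hrec (q - 1)
        rw [hq1', hq2'] at h
        exact h
      have er : ((v (q - 1) : ℝ) : ℂ) + ((v (q + 1) : ℝ) : ℂ)
          = (μ : ℂ) * ((v q : ℝ) : ℂ) := by exact_mod_cast hrr
      have hp := hpow (a q)
      linear_combination e3a + e3b + (lam : ℂ) * ((v q : ℝ) : ℂ) * er
        - (lam : ℂ) * (μ : ℂ) * e1 + (lam : ℂ) * (μ : ℂ) * hp
  refine ⟨xvec k m a y, ?_, ?_⟩
  · intro h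
    apply hAne 0 hv0
    simpa [xvec] using congrFun h ⟨0, by omega⟩
  · intro i
    rw [sum_edges hk]
    by_cases hr : (i : ℕ) % (k - 1) = 0
    · obtain ⟨q, hqd⟩ : ∃ q, (i : ℕ) / (k - 1) = q := ⟨_, rfl⟩
      have ei : (i : ℕ) = q * (k - 1) := by
        have e1 := Nat.div_add_mod (i : ℕ) (k - 1)
        rw [hqd] at e1
        have e3 : (k - 1) * q = q * (k - 1) := Nat.mul_comm _ _
        omega
      have hqm : q ≤ m := by
        by_contra hq
        push_neg at hq
        have h2 := Nat.mul_le_mul_right (k - 1) hq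
        rw [Nat.succ_mul] at h2
        have hlt := i.isLt
        omega
      rw [xvec_joint hr, hqd]
      by_cases hq0 : q = 0
      · rw [filter_joint0 hk hm hr (by rw [hqd, hq0]), Finset.sum_singleton]
        rw [prod_left hk (show 0 < m by omega) (by rw [ei, hq0])]
        rw [hq0]
        exact joint0
      · by_cases hqm' : q = m
        · rw [filter_jointm hk hm hr (by rw [hqd, hqm']), Finset.sum_singleton]
          have him : (i : ℕ) = (m - 1) * (k - 1) + (k - 1) := by
            rw [ei, hqm', ← Nat.succ_mul]
            congr 1
            omega
          rw [prod_right hk (show m - 1 < m by omega) him, hqm']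
          exact jointm
        · have hq1 : 1 ≤ q := by omega
          have hq2 : q < m := by omega
          rw [filter_jointmid hk hr (by rw [hqd]; exact hq1) (by rw [hqd]; exact hq2), hqd]
          rw [Finset.sum_pair (show q - 1 ≠ q by omega)]
          have him : (i : ℕ) = (q - 1) * (k - 1) + (k - 1) := by
            rw [ei, ← Nat.succ_mul]
            congr 1
            omega
          rw [prod_right hk (show q - 1 < m by omega) him, prod_left hk hq2 ei]
          exact jointmid q hq1 hq2
    · rw [filter_of_interior hk hr, Finset.sum_singleton]
      have hq := q_lt_m_of_mod_ne hk hr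
      have e1 := Nat.div_add_mod (i : ℕ) (k - 1)
      have e2 : (i : ℕ) % (k - 1) < k - 1 := Nat.mod_lt _ hK
      have e3 : (k - 1) * ((i : ℕ) / (k - 1)) = ((i : ℕ) / (k - 1)) * (k - 1) :=
        Nat.mul_comm _ _
      rw [prod_interior hk hq (by omega) (by omega), xvec_int hr]
      exact P2 _

end Stmt7Aux

namespace Stmt7Aux

lemma eq_of_sq_eq_sq {a b : ℝ} (ha : 0 ≤ a) (hb : 0 ≤ b) (h : a ^ 2 = b ^ 2) : a = b := by
  have h0 : (a - b) * (a + b) = 0 := by linear_combination h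
  rcases mul_eq_zero.1 h0 with h1 | h1
  · linarith
  · linarith

noncomputable def aEven (k : ℕ) (v : ℕ → ℝ) (s : ℕ) : ℂ :=
  ((v s : ℝ) : ℂ) ^ ((2 : ℂ) / k)

noncomputable def yEven (k : ℕ) (lam : ℝ) (v : ℕ → ℝ) (s : ℕ) : ℂ :=
  (aEven k v s * aEven k v (s + 1) / (lam : ℂ)) ^ ((1 : ℂ) / 2)

lemma construct_even (k n : ℕ) (hk : 3 ≤ k) (hkn : k = 2 * n) (lam μ : ℝ) (v : ℕ → ℝ)
    (hlam : 0 < lam) (hμn : μ = lam ^ n) :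
    ∃ a y : ℕ → ℂ,
      (∀ s, a s ^ k = ((v s : ℝ) : ℂ) ^ 2) ∧
      (∀ s, a s * (a (s + 1) * y s ^ (k - 3)) = (lam : ℂ) * y s ^ (k - 1)) ∧
      (∀ s, (μ : ℂ) * (a s * (a (s + 1) * y s ^ (k - 2)))
          = (lam : ℂ) * ((v s : ℝ) : ℂ) * ((v (s + 1) : ℝ) : ℂ)) ∧
      (∀ s, v s * v (s + 1) = 0 → y s = 0) := by
  have hn2 : 2 ≤ n := by omega
  have hkC : (k : ℂ) ≠ 0 := by exact_mod_cast (by omega : k ≠ 0)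
  have hlamC : (lam : ℂ) ≠ 0 := Complex.ofReal_ne_zero.2 hlam.ne'
  refine ⟨aEven k v, yEven k lam v, ?_, ?_, ?_, ?_⟩ <;> intro s
  case _ =>
    -- P1
    have han : aEven k v s ^ n = ((v s : ℝ) : ℂ) := by
      have h1 : ((n : ℂ)) * ((2 : ℂ) / k) = 1 := by
        rw [hkn]
        have hnC : (n : ℂ) ≠ 0 := by exact_mod_cast (by omega : n ≠ 0)
        push_cast
        field_simp
      rw [aEven, ← Complex.cpow_nat_mul, h1, Complex.cpow_one]
    have hsplit : aEven k v s ^ k = (aEven k v s ^ n) ^ 2 := by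
      rw [← pow_mul]
      congr 1
      omega
    rw [hsplit, han]
  case _ =>
    -- P2
    have hy2 : yEven k lam v s ^ 2 = aEven k v s * aEven k v (s + 1) / (lam : ℂ) := by
      have h1 : ((2 : ℕ) : ℂ) * ((1 : ℂ) / 2) = 1 := by norm_num
      rw [yEven, ← Complex.cpow_nat_mul, h1, Complex.cpow_one]
    rw [show k - 1 = (k - 3) + 2 by omega, pow_add, hy2]
    field_simp
  case _ =>
    -- P3
    have han : ∀ s', aEven k v s' ^ n = ((v s' : ℝ) : ℂ) := by
      intro s'
      have h1 : ((n : ℂ)) * ((2 : ℂ) / k) = 1 := by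
        rw [hkn]
        have hnC : (n : ℂ) ≠ 0 := by exact_mod_cast (by omega : n ≠ 0)
        push_cast
        field_simp
      rw [aEven, ← Complex.cpow_nat_mul, h1, Complex.cpow_one]
    have hy2 : yEven k lam v s ^ 2 = aEven k v s * aEven k v (s + 1) / (lam : ℂ) := by
      have h1 : ((2 : ℕ) : ℂ) * ((1 : ℂ) / 2) = 1 := by norm_num
      rw [yEven, ← Complex.cpow_nat_mul, h1, Complex.cpow_one]
    have e : yEven k lam v s ^ (k - 2)
        = (aEven k v s * aEven k v (s + 1)) ^ (n - 1) / (lam : ℂ) ^ (n - 1) := by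
      rw [show k - 2 = 2 * (n - 1) by omega, pow_mul, hy2, div_pow]
    have hμC : (μ : ℂ) = (lam : ℂ) ^ (n - 1) * (lam : ℂ) := by
      rw [hμn]
      push_cast
      conv_lhs => rw [show n = (n - 1) + 1 by omega]
      rw [pow_succ]
    have key1 : (aEven k v s * aEven k v (s + 1)) ^ (n - 1) * (aEven k v s * aEven k v (s + 1))
        = ((v s : ℝ) : ℂ) * ((v (s + 1) : ℝ) : ℂ) := by
      rw [← pow_succ, show (n - 1) + 1 = n by omega, mul_pow, han s, han (s + 1)]
    have hlp : (lam : ℂ) ^ (n - 1) ≠ 0 := pow_ne_zero _ hlamC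
    rw [e, hμC]
    field_simp
    linear_combination key1
  case _ =>
    -- P4
    intro h
    have ha0 : ∀ s', v s' = 0 → aEven k v s' = 0 := by
      intro s' h'
      rw [aEven, h', Complex.ofReal_zero,
        Complex.zero_cpow (div_ne_zero two_ne_zero hkC)]
    rcases mul_eq_zero.1 h with h' | h'
    · rw [yEven, ha0 _ h', zero_mul, zero_div,
        Complex.zero_cpow (by norm_num : (1 : ℂ) / 2 ≠ 0)]
    · rw [yEven, ha0 _ h', mul_zero, zero_div,
        Complex.zero_cpow (by norm_num : (1 : ℂ) / 2 ≠ 0)]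

noncomputable def arOdd (k : ℕ) (v : ℕ → ℝ) (s : ℕ) : ℝ := (v s ^ 2) ^ (k : ℝ)⁻¹

noncomputable def yOdd (k : ℕ) (lam : ℝ) (v : ℕ → ℝ) (s : ℕ) : ℝ :=
  if v s * v (s + 1) = 0 then 0
  else (if 0 < v s * v (s + 1) then 1 else -1)
    * Real.sqrt (arOdd k v s * arOdd k v (s + 1) / lam)

lemma construct_odd (k : ℕ) (hk : 3 ≤ k) (hko : k % 2 = 1) (lam μ : ℝ) (v : ℕ → ℝ)
    (hlam : 0 < lam) (hμpos : 0 < μ) (hμ2 : μ ^ 2 = lam ^ k) :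
    ∃ a y : ℕ → ℂ,
      (∀ s, a s ^ k = ((v s : ℝ) : ℂ) ^ 2) ∧
      (∀ s, a s * (a (s + 1) * y s ^ (k - 3)) = (lam : ℂ) * y s ^ (k - 1)) ∧
      (∀ s, (μ : ℂ) * (a s * (a (s + 1) * y s ^ (k - 2)))
          = (lam : ℂ) * ((v s : ℝ) : ℂ) * ((v (s + 1) : ℝ) : ℂ)) ∧
      (∀ s, v s * v (s + 1) = 0 → y s = 0) := by
  have hkR : (k : ℝ) ≠ 0 := by exact_mod_cast (by omega : k ≠ 0)
  have harnn : ∀ s, 0 ≤ arOdd k v s := fun s => Real.rpow_nonneg (sq_nonneg _) _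
  have harpow : ∀ s, arOdd k v s ^ k = v s ^ 2 := by
    intro s
    rw [arOdd, ← Real.rpow_natCast ((v s ^ 2) ^ (k : ℝ)⁻¹) k, ← Real.rpow_mul (sq_nonneg _),
      inv_mul_cancel₀ hkR, Real.rpow_one]
  have har0 : ∀ s, v s = 0 → arOdd k v s = 0 := by
    intro s h
    rw [arOdd, h, zero_pow (two_ne_zero), Real.zero_rpow (inv_ne_zero hkR)]
  refine ⟨fun s => ((arOdd k v s : ℝ) : ℂ), fun s => ((yOdd k lam v s : ℝ) : ℂ), ?_, ?_, ?_, ?_⟩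
      <;> intro s <;> beta_reduce
  case _ =>
    rw [← Complex.ofReal_pow, harpow s, Complex.ofReal_pow]
  case _ =>
    by_cases h0 : v s * v (s + 1) = 0
    · have hy0 : yOdd k lam v s = 0 := by rw [yOdd, if_pos h0]
      rw [hy0, Complex.ofReal_zero, zero_pow (show k - 1 ≠ 0 by omega), mul_zero]
      by_cases hk3 : k = 3
      · subst hk3
        norm_num
        rcases mul_eq_zero.1 h0 with h | h
        · left
          simp [har0 _ h]
        · right
          simp [har0 _ h]
      · rw [zero_pow (show k - 3 ≠ 0 by omega), mul_zero, mul_zero]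
    · obtain ⟨hv1, hv2⟩ := mul_ne_zero_iff.1 h0
      have hars : 0 < arOdd k v s := Real.rpow_pos_of_pos (by positivity) _
      have hars1 : 0 < arOdd k v (s + 1) := Real.rpow_pos_of_pos (by positivity) _
      have hR : 0 < arOdd k v s * arOdd k v (s + 1) / lam := by positivity
      have hy2 : yOdd k lam v s ^ 2 = arOdd k v s * arOdd k v (s + 1) / lam := by
        rw [yOdd, if_neg h0, mul_pow]
        have hs2 : (if 0 < v s * v (s + 1) then (1:ℝ) else -1) ^ 2 = 1 := by
          split <;> norm_num
        rw [hs2, one_mul, Real.sq_sqrt hR.le]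
      have hlamC : ((lam : ℝ) : ℂ) ≠ 0 := Complex.ofReal_ne_zero.2 hlam.ne'
      rw [show k - 1 = (k - 3) + 2 by omega, pow_add]
      have hcast : ((yOdd k lam v s : ℝ) : ℂ) ^ 2
          = ((arOdd k v s : ℝ) : ℂ) * ((arOdd k v (s + 1) : ℝ) : ℂ) / ((lam : ℝ) : ℂ) := by
        rw [← Complex.ofReal_pow, hy2]
        push_cast
        ring
      rw [hcast]
      field_simp
  case _ =>
    by_cases h0 : v s * v (s + 1) = 0
    · have hy0 : yOdd k lam v s = 0 := by rw [yOdd, if_pos h0]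
      rw [hy0, Complex.ofReal_zero, zero_pow (show k - 2 ≠ 0 by omega), mul_zero, mul_zero,
        mul_assoc, ← Complex.ofReal_mul, h0]
      simp
    · obtain ⟨hv1, hv2⟩ := mul_ne_zero_iff.1 h0
      have hars : 0 < arOdd k v s := Real.rpow_pos_of_pos (by positivity) _
      have hars1 : 0 < arOdd k v (s + 1) := Real.rpow_pos_of_pos (by positivity) _
      have hR : 0 < arOdd k v s * arOdd k v (s + 1) / lam := by positivity
      set S := Real.sqrt (arOdd k v s * arOdd k v (s + 1) / lam) with hSdef
      have hSpos : 0 < S := Real.sqrt_pos.2 hR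
      have hS2 : S ^ 2 = arOdd k v s * arOdd k v (s + 1) / lam := Real.sq_sqrt hR.le
      have hkodd : Odd (k - 2) := ⟨(k - 3) / 2, by omega⟩
      set σ := (if 0 < v s * v (s + 1) then (1:ℝ) else -1) with hσdef
      have hσval : σ = 1 ∧ 0 < v s * v (s + 1) ∨ σ = -1 ∧ v s * v (s + 1) < 0 := by
        rcases lt_trichotomy (v s * v (s + 1)) 0 with h | h | h
        · right
          rw [hσdef, if_neg (by linarith)]
          exact ⟨rfl, h⟩
        · exact absurd h h0
        · left
          rw [hσdef, if_pos h]
          exact ⟨rfl, h⟩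
      have hσnn : 0 ≤ σ * σ := by rcases hσval with ⟨h1, _⟩ | ⟨h1, _⟩ <;> rw [h1] <;> norm_num
      have main : μ * (arOdd k v s * (arOdd k v (s + 1) * S ^ (k - 2)))
          = lam * |v s * v (s + 1)| := by
        apply eq_of_sq_eq_sq (by positivity) (by positivity)
        have e1 : (S ^ (k - 2)) ^ 2 = (arOdd k v s * arOdd k v (s + 1) / lam) ^ (k - 2) := by
          rw [← pow_mul, mul_comm (k - 2) 2, pow_mul, hS2]
        have e2 : (arOdd k v s * arOdd k v (s + 1) / lam) ^ (k - 2) * lam ^ (k - 2)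
            = (arOdd k v s * arOdd k v (s + 1)) ^ (k - 2) := by
          rw [div_pow, div_mul_cancel₀]
          exact pow_ne_zero _ hlam.ne'
        have e3 : (arOdd k v s * arOdd k v (s + 1)) ^ (k - 2)
              * (arOdd k v s * arOdd k v (s + 1)) ^ 2
            = v s ^ 2 * v (s + 1) ^ 2 := by
          rw [← pow_add, show k - 2 + 2 = k by omega, mul_pow, harpow, harpow]
        have e6 : lam ^ k = lam ^ (k - 2) * lam ^ 2 := by
          rw [← pow_add]
          congr 1
          omega
        have e7 : |v s * v (s + 1)| ^ 2 = (v s * v (s + 1)) ^ 2 := sq_abs _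
        linear_combination (arOdd k v s * arOdd k v (s + 1)) ^ 2 * (S ^ (k - 2)) ^ 2 * hμ2
          + (arOdd k v s * arOdd k v (s + 1)) ^ 2 * (S ^ (k - 2)) ^ 2 * e6
          + lam ^ (k - 2) * lam ^ 2 * (arOdd k v s * arOdd k v (s + 1)) ^ 2 * e1
          + lam ^ 2 * (arOdd k v s * arOdd k v (s + 1)) ^ 2 * e2
          + lam ^ 2 * e3 - lam ^ 2 * e7
      have hyrval : yOdd k lam v s = σ * S := by rw [yOdd, if_neg h0]
      have habs : v s * v (s + 1) = σ * |v s * v (s + 1)| := by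
        rcases hσval with ⟨h1, h2⟩ | ⟨h1, h2⟩
        · rw [h1, one_mul, abs_of_pos h2]
        · rw [h1, abs_of_neg h2]
          ring
      have hσpow : σ ^ (k - 2) = σ := by
        rcases hσval with ⟨h1, _⟩ | ⟨h1, _⟩
        · rw [h1, one_pow]
        · rw [h1, hkodd.neg_one_pow]
      have mainR : μ * (arOdd k v s * (arOdd k v (s + 1) * yOdd k lam v s ^ (k - 2)))
          = lam * (v s * v (s + 1)) := by
        rw [hyrval, mul_pow, hσpow, habs]
        linear_combination σ * main
      calc (μ : ℂ) * (((arOdd k v s : ℝ) : ℂ) * (((arOdd k v (s + 1) : ℝ) : ℂ)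
              * ((yOdd k lam v s : ℝ) : ℂ) ^ (k - 2)))
          = ((μ * (arOdd k v s * (arOdd k v (s + 1) * yOdd k lam v s ^ (k - 2))) : ℝ) : ℂ) := by
            push_cast
            ring
        _ = ((lam * (v s * v (s + 1)) : ℝ) : ℂ) := by rw [mainR]
        _ = (lam : ℂ) * ((v s : ℝ) : ℂ) * ((v (s + 1) : ℝ) : ℂ) := by
            push_cast
            ring
  case _ =>
    intro h
    rw [yOdd, if_pos h, Complex.ofReal_zero]

end Stmt7Aux


/-- For `k ≥ 3`, `m ≥ 1` and `t ∈ {1,…,m+1}`, the nonnegative real number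
`(4cos²(πt/(m+2)))^{1/k}` is an eigenvalue of the hyperpath `P_m^{(k)}`. -/
theorem stmt7 (k m t : ℕ) (hk : 3 ≤ k) (hm : 1 ≤ m) (ht : t ∈ Finset.Icc 1 (m + 1)) :
    IsHypEigenvalue (hyperpathEdges k m) k
      (((4 * Real.cos (Real.pi * t / (m + 2)) ^ 2) ^ ((1 : ℝ) / k) : ℝ) : ℂ) := by
  rw [Finset.mem_Icc] at ht
  obtain ⟨ht1, ht2⟩ := ht
  have hkR : ((k : ℝ)) ≠ 0 := by exact_mod_cast (by omega : k ≠ 0)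
  set θ := Real.pi * t / (m + 2) with hθ
  by_cases hc : Real.cos θ = 0
  · have hz : ((4 * Real.cos θ ^ 2) ^ ((1 : ℝ) / k) : ℝ) = 0 := by
      rw [hc, show (4 : ℝ) * 0 ^ 2 = 0 by norm_num]
      exact Real.zero_rpow (by positivity)
    rw [hz, Complex.ofReal_zero]
    exact Stmt7Aux.key0 hk hm
  · set t' := min t (m + 2 - t) with ht'
    have ht'1 : 1 ≤ t' := by omega
    have ht'2 : 2 * t' ≤ m + 2 := by omega
    have ht'3 : t' < m + 2 := by omega
    set φ := Real.pi * t' / (m + 2) with hφ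
    have hm2pos : (0 : ℝ) < (m : ℝ) + 2 := by positivity
    have hπ := Real.pi_pos
    have ht'R : (0 : ℝ) < (t' : ℝ) := by exact_mod_cast ht'1
    have hφpos : 0 < φ := by
      rw [hφ]
      positivity
    have hφlt : φ < Real.pi := by
      rw [hφ, div_lt_iff₀ hm2pos]
      have h1 : (t' : ℝ) < (m : ℝ) + 2 := by exact_mod_cast ht'3
      nlinarith
    have hφle : φ ≤ Real.pi / 2 := by
      rw [hφ, div_le_div_iff₀ hm2pos (by norm_num : (0 : ℝ) < 2)]
      have h2t : ((2 * t' : ℕ) : ℝ) ≤ ((m + 2 : ℕ) : ℝ) := Nat.cast_le.2 ht'2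
      push_cast at h2t
      nlinarith
    have hcosφ : 0 ≤ Real.cos φ := Real.cos_nonneg_of_mem_Icc ⟨by linarith, hφle⟩
    have hsinφ : 0 < Real.sin φ := Real.sin_pos_of_pos_of_lt_pi hφpos hφlt
    have hcos2 : Real.cos φ ^ 2 = Real.cos θ ^ 2 := by
      rcases le_total t (m + 2 - t) with hle | hle
      · have htt : t' = t := by omega
        rw [hφ, hθ, htt]
      · have htt : t' = m + 2 - t := by omega
        have hmt : t ≤ m + 2 := by omega
        have hcast : ((m + 2 - t : ℕ) : ℝ) = (m : ℝ) + 2 - t := by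
          push_cast [hmt]
          ring
        have hφeq : φ = Real.pi - θ := by
          rw [hφ, hθ, htt, hcast]
          field_simp
        rw [hφeq, Real.cos_pi_sub]
        ring
    have hcosφne : Real.cos φ ≠ 0 := by
      intro h
      apply hc
      have h2 : Real.cos θ ^ 2 = 0 := by
        rw [← hcos2, h]
        ring
      exact pow_eq_zero_iff two_ne_zero |>.1 h2
    have hcosφpos : 0 < Real.cos φ := lt_of_le_of_ne hcosφ (Ne.symm hcosφne)
    set lam := (4 * Real.cos θ ^ 2) ^ ((1 : ℝ) / k) with hlamdef
    have hbase : (0 : ℝ) < 4 * Real.cos θ ^ 2 := by positivity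
    have hlampos : 0 < lam := Real.rpow_pos_of_pos hbase _
    have hlamk : lam ^ k = 4 * Real.cos θ ^ 2 := by
      rw [hlamdef, ← Real.rpow_natCast ((4 * Real.cos θ ^ 2) ^ ((1 : ℝ) / k)) k,
        ← Real.rpow_mul hbase.le, one_div, inv_mul_cancel₀ hkR, Real.rpow_one]
    set μ := 2 * Real.cos φ with hμdef
    have hμpos : 0 < μ := by
      rw [hμdef]
      positivity
    have hμ2 : μ ^ 2 = lam ^ k := by
      rw [hlamk, hμdef, ← hcos2]
      ring
    set v : ℕ → ℝ := fun s => Real.sin ((s + 1) * φ) with hv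
    have hv0 : v 0 ≠ 0 := by
      show Real.sin ((((0 : ℕ) : ℝ) + 1) * φ) ≠ 0
      norm_num
      exact hsinφ.ne'
    have hrec0 : v 1 = μ * v 0 := by
      show Real.sin ((((1 : ℕ) : ℝ) + 1) * φ) = 2 * Real.cos φ * Real.sin ((((0 : ℕ) : ℝ) + 1) * φ)
      norm_num
      rw [Real.sin_two_mul]
      ring
    have hrec : ∀ s, v s + v (s + 2) = μ * v (s + 1) := by
      intro s
      show Real.sin (((s : ℕ) + 1 : ℝ) * φ) + Real.sin ((((s + 2 : ℕ) : ℝ) + 1) * φ)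
        = 2 * Real.cos φ * Real.sin ((((s + 1 : ℕ) : ℝ) + 1) * φ)
      push_cast
      have h1 : ((s : ℝ) + 1) * φ = ((s : ℝ) + 2) * φ - φ := by ring
      have h2 : ((s : ℝ) + 2 + 1) * φ = ((s : ℝ) + 2) * φ + φ := by ring
      have h3 : ((s : ℝ) + 1 + 1) * φ = ((s : ℝ) + 2) * φ := by ring
      rw [h1, h2, h3, Real.sin_sub, Real.sin_add]
      ring
    have hvm : v (m + 1) = 0 := by
      show Real.sin ((((m + 1 : ℕ) : ℝ) + 1) * φ) = 0
      push_cast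
      have h1 : ((m : ℝ) + 1 + 1) * φ = (t' : ℝ) * Real.pi := by
        rw [hφ]
        field_simp
        ring
      rw [h1]
      exact Real.sin_nat_mul_pi t'
    rcases Nat.even_or_odd k with hke | hko
    · obtain ⟨n, hn⟩ := hke
      have hkn : k = 2 * n := by omega
      have hμn : μ = lam ^ n := by
        apply Stmt7Aux.eq_of_sq_eq_sq hμpos.le (pow_nonneg hlampos.le _)
        rw [hμ2, ← pow_mul]
        congr 1
        omega
      obtain ⟨a, y, hP1, hP2, hP3, hP4⟩ :=
        Stmt7Aux.construct_even k n hk hkn lam μ v hlampos hμn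
      exact Stmt7Aux.key hk hm lam μ hlampos.ne' hμpos.ne' v a y hv0 hrec0 hrec hvm
        hP1 hP2 hP3 hP4
    · obtain ⟨a, y, hP1, hP2, hP3, hP4⟩ :=
        Stmt7Aux.construct_odd k hk (Nat.odd_iff.1 hko) lam μ v hlampos hμpos hμ2
      exact Stmt7Aux.key hk hm lam μ hlampos.ne' hμpos.ne' v a y hv0 hrec0 hrec hvm
        hP1 hP2 hP3 hP4
end

section
/- Let k ≥ 2 and m ≥ 1. The spectral radius of the k-uniform hyperpath P_m^{(k)} equals (2·cos(π/(m+2)))^{2/k}; that is, the real number (4·cos²(π/(m+2)))^{1/k} is an eigenvalue of the adjacency tensor of P_m^{(k)}, and every eigenvalue λ of P_m^{(k)} satisfies |λ| ≤ (4·cos²(π/(m+2)))^{1/k}. -/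
open Finset Real


namespace S8

def edgeF (k m : ℕ) (s : ℕ) : Finset (Fin (m * (k - 1) + 1)) :=
  Finset.univ.filter fun i => s * (k - 1) ≤ (i : ℕ) ∧ (i : ℕ) ≤ (s + 1) * (k - 1)

variable {k m : ℕ}

lemma mem_edgeF {s : ℕ} {i : Fin (m * (k - 1) + 1)} :
    i ∈ edgeF k m s ↔ s * (k - 1) ≤ (i : ℕ) ∧ (i : ℕ) ≤ (s + 1) * (k - 1) := by
  simp [edgeF]

lemma edgeF_image_val {s : ℕ} (hs : s < m) :
    (edgeF k m s).image Fin.val = Finset.Icc (s * (k - 1)) ((s + 1) * (k - 1)) := by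
  ext t
  simp only [Finset.mem_image, Finset.mem_Icc, mem_edgeF]
  constructor
  · rintro ⟨i, h, rfl⟩; exact h
  · rintro ⟨h1, h2⟩
    have hle : (s + 1) * (k - 1) ≤ m * (k - 1) := Nat.mul_le_mul_right _ hs
    exact ⟨⟨t, by omega⟩, ⟨h1, h2⟩, rfl⟩

lemma mem_cond {K s s0 r : ℕ} (hK : 0 < K) (hr : r < K) :
    (s * K ≤ s0 * K + r ∧ s0 * K + r ≤ (s + 1) * K) ↔
      (s ≤ s0 ∧ s0 ≤ s + 1 ∧ (r ≠ 0 → s0 ≤ s)) := by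
  constructor
  · rintro ⟨h1, h2⟩
    refine ⟨?_, ?_, ?_⟩
    · by_contra hc
      have : (s0 + 1) * K ≤ s * K := Nat.mul_le_mul_right _ (by omega)
      nlinarith [this, h1]
    · by_contra hc
      have : (s + 2) * K ≤ s0 * K := Nat.mul_le_mul_right _ (by omega)
      nlinarith [this, h2]
    · intro hr0
      by_contra hc
      have : (s + 1) * K ≤ s0 * K := Nat.mul_le_mul_right _ (by omega)
      omega
  · rintro ⟨h1, h2, h3⟩
    constructor
    · have : s * K ≤ s0 * K := Nat.mul_le_mul_right _ h1
      omega
    · rcases Nat.eq_zero_or_pos r with hr0 | hr0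
      · have : s0 * K ≤ (s + 1) * K := Nat.mul_le_mul_right _ h2
        omega
      · have : (s0 + 1) * K ≤ (s + 1) * K := Nat.mul_le_mul_right _ (by omega)
        nlinarith [this]

lemma edgeF_injOn (hk : 2 ≤ k) :
    Set.InjOn (edgeF k m) (Finset.range m) := by
  intro s hs s' hs' h
  simp only [Finset.coe_range, Set.mem_Iio] at hs hs'
  have hK : 0 < k - 1 := by omega
  have key : ∀ a b : ℕ, a < m → b < m → edgeF k m a = edgeF k m b → a * (k-1) ≤ b * (k-1) := by
    intro a b ha hb hab
    have hmem : (⟨b * (k-1), by have := Nat.mul_le_mul_right (k-1) hb.le; omega⟩ :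
        Fin (m * (k - 1) + 1)) ∈ edgeF k m b := by
      rw [mem_edgeF]
      exact ⟨le_refl _, Nat.mul_le_mul_right _ (by omega)⟩
    rw [← hab, mem_edgeF] at hmem
    exact hmem.1
  exact Nat.eq_of_mul_eq_mul_right hK
    (le_antisymm (key s s' hs hs' h) (key s' s hs' hs h.symm))

section FilterLemmas

variable (hk : 2 ≤ k) (i : Fin (m * (k - 1) + 1))

include hk

lemma filter_interior (hr : (i : ℕ) % (k - 1) ≠ 0) :
    (Finset.range m).filter (fun s => i ∈ edgeF k m s) = {(i : ℕ) / (k - 1)} := by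
  have hK : 0 < k - 1 := by omega
  set s0 := (i : ℕ) / (k - 1) with hs0
  set r := (i : ℕ) % (k - 1) with hr'
  have hrK : r < k - 1 := Nat.mod_lt _ hK
  have hdec : (i : ℕ) = s0 * (k - 1) + r := (Nat.div_add_mod' _ _).symm
  have hi : (i : ℕ) < m * (k-1) := by
    have h2 := i.isLt
    rcases Nat.lt_or_ge (i : ℕ) (m * (k-1)) with h | h
    · exact h
    · exfalso; apply hr
      have : (i : ℕ) = m * (k-1) := by omega
      rw [hr', this, Nat.mul_mod_left]
  have hdiv : s0 < m := by
    rw [hs0]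
    apply Nat.div_lt_of_lt_mul
    rwa [Nat.mul_comm (k-1) m]
  ext s
  simp only [Finset.mem_filter, Finset.mem_range, mem_edgeF, Finset.mem_singleton]
  rw [hdec, mem_cond hK hrK]
  omega

lemma filter_joint (hm : 1 ≤ m) (hr : (i : ℕ) % (k - 1) = 0) :
    (Finset.range m).filter (fun s => i ∈ edgeF k m s) =
      if (i : ℕ) = 0 then {0}
      else if (i : ℕ) = m * (k-1) then {m - 1}
      else {(i : ℕ) / (k - 1) - 1, (i : ℕ) / (k - 1)} := by
  have hK : 0 < k - 1 := by omega
  set s0 := (i : ℕ) / (k - 1) with hs0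
  have hdec0 : (i : ℕ) = s0 * (k - 1) + (i : ℕ) % (k-1) := (Nat.div_add_mod' _ _).symm
  have hdec : (i : ℕ) = s0 * (k - 1) := by omega
  clear_value s0
  have hi : (i : ℕ) ≤ m * (k-1) := by have := i.isLt; omega
  have hdiv : s0 ≤ m := by
    have h1 := Nat.div_le_div_right (c := k - 1) hi
    rw [Nat.mul_div_cancel m hK] at h1
    omega
  have hiff1 : (i : ℕ) = 0 ↔ s0 = 0 := by
    rw [hdec]
    constructor
    · intro h; rcases Nat.mul_eq_zero.mp h with h | h
      · exact h
      · omega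
    · intro h; rw [h, Nat.zero_mul]
  have hiff2 : (i : ℕ) = m * (k - 1) ↔ s0 = m := by
    rw [hdec]
    constructor
    · intro h; exact Nat.eq_of_mul_eq_mul_right hK h
    · intro h; rw [h]
  have hmem : ∀ s, (i ∈ edgeF k m s) ↔ (s ≤ s0 ∧ s0 ≤ s + 1) := by
    intro s
    rw [mem_edgeF, show ((i:ℕ) = s0 * (k-1) + 0) by omega, mem_cond hK hK]
    simp
  split_ifs with h1 h2
  · rw [hiff1] at h1
    ext s
    simp only [Finset.mem_filter, Finset.mem_range, hmem, Finset.mem_singleton]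
    omega
  · rw [hiff2] at h2
    rw [hiff1] at h1
    ext s
    simp only [Finset.mem_filter, Finset.mem_range, hmem, Finset.mem_singleton]
    omega
  · rw [hiff1] at h1
    rw [hiff2] at h2
    ext s
    simp only [Finset.mem_filter, Finset.mem_range, hmem, Finset.mem_insert,
      Finset.mem_singleton]
    omega

end FilterLemmas



noncomputable section

def tv (m : ℕ) : ℝ := Real.pi / (m + 2)
def yv (m : ℕ) (s : ℕ) : ℝ := Real.sin ((s + 1) * tv m)
def rhov (m : ℕ) : ℝ := 2 * Real.cos (tv m)
def lamR (k m : ℕ) : ℝ := rhov m ^ ((2 : ℝ) / k)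
def Uv (k m : ℕ) (s : ℕ) : ℝ := yv m s ^ ((2 : ℝ) / k)
def Wv (k m : ℕ) (s : ℕ) : ℝ :=
  (yv m s * yv m (s + 1)) ^ ((1 : ℝ) / k) * rhov m ^ (-((1 : ℝ) / k))
def Zv (k m : ℕ) (t : ℕ) : ℝ :=
  if (k - 1) ∣ t then Uv k m (t / (k - 1)) else Wv k m (t / (k - 1))

variable {k m : ℕ}

lemma tv_pos : 0 < tv m := by
  apply div_pos Real.pi_pos
  positivity

lemma tv_lt (hm : 1 ≤ m) : tv m < Real.pi / 2 :=
  div_lt_div_of_pos_left Real.pi_pos (by norm_num)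
    (by have : (1 : ℝ) ≤ (m : ℝ) := Nat.one_le_cast.mpr hm; linarith)

lemma cos_tv_pos (hm : 1 ≤ m) : 0 < Real.cos (tv m) :=
  Real.cos_pos_of_mem_Ioo ⟨by linarith [tv_pos (m := m), Real.pi_pos], tv_lt hm⟩

lemma rhov_pos (hm : 1 ≤ m) : 0 < rhov m := by
  have := cos_tv_pos (m := m) hm; unfold rhov; linarith

lemma yv_pos {s : ℕ} (hs : s ≤ m) : 0 < yv m s := by
  apply Real.sin_pos_of_pos_of_lt_pi
  · exact mul_pos (by positivity) tv_pos
  · have h1 : ((s : ℝ) + 1) < (m : ℝ) + 2 := by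
      have : (s : ℝ) ≤ (m : ℝ) := Nat.cast_le.mpr hs
      linarith
    have h2 : ((s : ℝ) + 1) * tv m < ((m : ℝ) + 2) * tv m :=
      mul_lt_mul_of_pos_right h1 tv_pos
    have h3 : ((m : ℝ) + 2) * tv m = Real.pi := by
      unfold tv; field_simp
    linarith

lemma Uv_pos (hs : s ≤ m) : 0 < Uv k m s := Real.rpow_pos_of_pos (yv_pos hs) _

lemma Wv_pos {s : ℕ} (hs : s + 1 ≤ m) : 0 < Wv k m s := by
  unfold Wv
  have h1 := yv_pos (m := m) (s := s) (by omega)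
  have h2 := yv_pos (m := m) (s := s + 1) hs
  have h3 := rhov_pos (m := m) (by omega)
  positivity

lemma trig_aux (a b : ℝ) : Real.sin (a - b) + Real.sin (a + b) = 2 * Real.cos b * Real.sin a := by
  rw [Real.sin_sub, Real.sin_add]; ring

lemma ytrig (s : ℕ) : yv m s + yv m (s + 2) = rhov m * yv m (s + 1) := by
  unfold yv rhov
  have h := trig_aux (((s : ℝ) + 2) * tv m) (tv m)
  push_cast
  rw [show ((s : ℝ) + 1) * tv m = ((s : ℝ) + 2) * tv m - tv m by ring,
    show ((s : ℝ) + 2 + 1) * tv m = ((s : ℝ) + 2) * tv m + tv m by ring,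
    show ((s : ℝ) + 1 + 1) * tv m = ((s : ℝ) + 2) * tv m by ring]
  exact h

lemma ytrig0 : yv m 1 = rhov m * yv m 0 := by
  unfold yv rhov
  norm_num
  rw [show (2 : ℝ) * tv m = tv m + tv m by ring, Real.sin_add]
  ring

lemma yv_top : yv m (m + 1) = 0 := by
  unfold yv
  push_cast
  have : ((m : ℝ) + 1 + 1) * tv m = Real.pi := by
    unfold tv; field_simp; ring
  rw [this, Real.sin_pi]

lemma ytrigm (hm : 1 ≤ m) : yv m (m - 1) = rhov m * yv m m := by
  have h := ytrig (m := m) (s := m - 1)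
  rw [show m - 1 + 2 = m + 1 by omega, show m - 1 + 1 = m by omega, yv_top] at h
  linarith

end



noncomputable section
variable {k m : ℕ}

lemma eq_of_log {x y : ℝ} (hx : 0 < x) (hy : 0 < y) (h : Real.log x = Real.log y) : x = y :=
  Real.log_injOn_pos (Set.mem_Ioi.mpr hx) (Set.mem_Ioi.mpr hy) h

lemma cast_sub2 (hk : 2 ≤ k) : ((k - 2 : ℕ) : ℝ) = (k : ℝ) - 2 := by
  push_cast [Nat.cast_sub hk]; ring

lemma cast_sub1 (hk : 2 ≤ k) : ((k - 1 : ℕ) : ℝ) = (k : ℝ) - 1 := by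
  have : 1 ≤ k := by omega
  push_cast [Nat.cast_sub this]; ring

lemma cast_sub3 (hk : 3 ≤ k) : ((k - 3 : ℕ) : ℝ) = (k : ℝ) - 3 := by
  push_cast [Nat.cast_sub hk]; ring

lemma kR_ne (hk : 2 ≤ k) : (k : ℝ) ≠ 0 := by
  have : (0 : ℝ) < k := by exact_mod_cast Nat.lt_of_lt_of_le Nat.zero_lt_two hk
  linarith

/-- Interior eigen identity. -/
lemma eigInt (hk : 3 ≤ k) (hm : 1 ≤ m) {s : ℕ} (hs : s + 1 ≤ m) :
    Uv k m s * Uv k m (s + 1) * Wv k m s ^ (k - 3)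
      = lamR k m * Wv k m s ^ (k - 1) := by
  have hk2 : 2 ≤ k := by omega
  have hy1 : 0 < yv m s := yv_pos (by omega)
  have hy2 : 0 < yv m (s + 1) := yv_pos hs
  have hr : 0 < rhov m := rhov_pos hm
  have hW : 0 < Wv k m s := Wv_pos hs
  have hU1 : 0 < Uv k m s := Uv_pos (by omega)
  have hU2 : 0 < Uv k m (s + 1) := Uv_pos hs
  have hlam : 0 < lamR k m := Real.rpow_pos_of_pos hr _
  apply eq_of_log (by positivity) (by positivity)
  rw [Real.log_mul (by positivity) (by positivity),
    Real.log_mul (by positivity) (by positivity),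
    Real.log_mul (by positivity) (by positivity),
    Real.log_pow, Real.log_pow]
  unfold Uv Wv lamR
  rw [Real.log_rpow hy1, Real.log_rpow hy2, Real.log_rpow hr,
    Real.log_mul (by positivity) (by positivity),
    Real.log_rpow (by positivity), Real.log_rpow hr,
    Real.log_mul hy1.ne' hy2.ne']
  rw [cast_sub3 hk, cast_sub1 hk2]
  field_simp
  ring

/-- Left-end eigen identity (`s = 0`). -/
lemma eigJ0 (hk : 2 ≤ k) (hm : 1 ≤ m) :
    Uv k m 1 * Wv k m 0 ^ (k - 2) = lamR k m * Uv k m 0 ^ (k - 1) := by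
  have hy0 : 0 < yv m 0 := yv_pos (by omega)
  have hr : 0 < rhov m := rhov_pos hm
  unfold Uv Wv lamR
  rw [show (0 + 1 : ℕ) = 1 from rfl, ytrig0]
  apply eq_of_log (by positivity) (by positivity)
  repeat
    first
    | rw [Real.log_mul (by positivity) (by positivity)]
    | rw [Real.log_rpow (by positivity)]
    | rw [Real.log_pow]
  rw [cast_sub2 hk, cast_sub1 hk]
  field_simp
  ring

/-- Right-end eigen identity (`s = m`). -/
lemma eigJm (hk : 2 ≤ k) (hm : 1 ≤ m) :
    Uv k m (m - 1) * Wv k m (m - 1) ^ (k - 2) = lamR k m * Uv k m m ^ (k - 1) := by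
  have hym : 0 < yv m m := yv_pos le_rfl
  have hr : 0 < rhov m := rhov_pos hm
  unfold Uv Wv lamR
  rw [show m - 1 + 1 = m by omega, ytrigm hm]
  apply eq_of_log (by positivity) (by positivity)
  repeat
    first
    | rw [Real.log_mul (by positivity) (by positivity)]
    | rw [Real.log_rpow (by positivity)]
    | rw [Real.log_pow]
  rw [cast_sub2 hk, cast_sub1 hk]
  field_simp
  ring

/-- Factored form of the one-sided joint products. -/
lemma idA (hk : 2 ≤ k) (hm : 1 ≤ m) {s : ℕ} (hs : s + 1 ≤ m) :
    Uv k m (s + 1) * Wv k m s ^ (k - 2)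
      = yv m s ^ (((k : ℝ) - 2) / k) * yv m (s + 1) * rhov m ^ (-(((k : ℝ) - 2) / k)) := by
  have hy1 : 0 < yv m s := yv_pos (by omega)
  have hy2 : 0 < yv m (s + 1) := yv_pos hs
  have hr : 0 < rhov m := rhov_pos hm
  unfold Uv Wv
  apply eq_of_log (by positivity) (by positivity)
  rw [Real.log_mul (by positivity) (by positivity),
    Real.log_mul (by positivity) (by positivity),
    Real.log_mul (by positivity) (by positivity),
    Real.log_pow,
    Real.log_rpow hy2, Real.log_rpow hy1, Real.log_rpow hr,
    Real.log_mul (by positivity) (by positivity),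
    Real.log_rpow (by positivity), Real.log_rpow hr,
    Real.log_mul hy1.ne' hy2.ne']
  rw [cast_sub2 hk]
  field_simp
  ring

lemma idB (hk : 2 ≤ k) (hm : 1 ≤ m) {s : ℕ} (hs : s + 1 ≤ m) :
    Uv k m s * Wv k m s ^ (k - 2)
      = yv m (s + 1) ^ (((k : ℝ) - 2) / k) * yv m s * rhov m ^ (-(((k : ℝ) - 2) / k)) := by
  have hy1 : 0 < yv m s := yv_pos (by omega)
  have hy2 : 0 < yv m (s + 1) := yv_pos hs
  have hr : 0 < rhov m := rhov_pos hm
  unfold Uv Wv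
  apply eq_of_log (by positivity) (by positivity)
  rw [Real.log_mul (by positivity) (by positivity),
    Real.log_mul (by positivity) (by positivity),
    Real.log_mul (by positivity) (by positivity),
    Real.log_pow,
    Real.log_rpow hy1, Real.log_rpow hy2, Real.log_rpow hr,
    Real.log_mul (by positivity) (by positivity),
    Real.log_rpow (by positivity), Real.log_rpow hr,
    Real.log_mul hy1.ne' hy2.ne']
  rw [cast_sub2 hk]
  field_simp
  ring

lemma idC (hk : 2 ≤ k) (hm : 1 ≤ m) {s : ℕ} (hs : s ≤ m) :
    yv m s ^ (((k : ℝ) - 2) / k) * (rhov m * yv m s) * rhov m ^ (-(((k : ℝ) - 2) / k))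
      = lamR k m * Uv k m s ^ (k - 1) := by
  have hy : 0 < yv m s := yv_pos hs
  have hr : 0 < rhov m := rhov_pos hm
  unfold Uv lamR
  apply eq_of_log (by positivity) (by positivity)
  rw [Real.log_mul (by positivity) (by positivity),
    Real.log_mul (by positivity) (by positivity),
    Real.log_mul hr.ne' hy.ne',
    Real.log_mul (by positivity) (by positivity),
    Real.log_pow,
    Real.log_rpow hy, Real.log_rpow hr, Real.log_rpow hr, Real.log_rpow hy]
  rw [cast_sub1 hk]
  field_simp
  ring

/-- Middle joint eigen identity. -/
lemma eigJmid (hk : 2 ≤ k) (hm : 1 ≤ m) {s : ℕ} (hs1 : 1 ≤ s) (hs2 : s < m) :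
    Uv k m (s - 1) * Wv k m (s - 1) ^ (k - 2) + Uv k m (s + 1) * Wv k m s ^ (k - 2)
      = lamR k m * Uv k m s ^ (k - 1) := by
  have e1 := idB hk hm (s := s - 1) (by omega)
  rw [show s - 1 + 1 = s by omega] at e1
  have e2 := idA hk hm (s := s) (by omega)
  have tr := ytrig (m := m) (s := s - 1)
  rw [show s - 1 + 2 = s + 1 by omega, show s - 1 + 1 = s by omega] at tr
  rw [e1, e2]
  calc yv m s ^ (((k : ℝ) - 2) / k) * yv m (s - 1) * rhov m ^ (-(((k : ℝ) - 2) / k)) +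
        yv m s ^ (((k : ℝ) - 2) / k) * yv m (s + 1) * rhov m ^ (-(((k : ℝ) - 2) / k))
      = yv m s ^ (((k : ℝ) - 2) / k) * (yv m (s - 1) + yv m (s + 1)) *
          rhov m ^ (-(((k : ℝ) - 2) / k)) := by ring
    _ = yv m s ^ (((k : ℝ) - 2) / k) * (rhov m * yv m s) *
          rhov m ^ (-(((k : ℝ) - 2) / k)) := by rw [tr]
    _ = lamR k m * Uv k m s ^ (k - 1) := idC hk hm hs2.le

end

section Products
variable {k m : ℕ}

lemma Zv_joint (hk : 2 ≤ k) (s : ℕ) : Zv k m (s * (k - 1)) = Uv k m s := by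
  have hK : 0 < k - 1 := by omega
  unfold Zv
  rw [if_pos (dvd_mul_left (k - 1) s), Nat.mul_div_cancel s hK]

lemma Zv_int (hk : 2 ≤ k) {s t : ℕ} (h1 : s * (k - 1) < t) (h2 : t < (s + 1) * (k - 1)) :
    Zv k m t = Wv k m s := by
  have hK : 0 < k - 1 := by omega
  have hcm1 : s * (k - 1) = (k - 1) * s := Nat.mul_comm _ _
  have hcm2 : (s + 1) * (k - 1) = (k - 1) * (s + 1) := Nat.mul_comm _ _
  have hnd : ¬ (k - 1) ∣ t := by
    rintro ⟨c, rfl⟩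
    have hc1 : s < c := by
      by_contra hc
      push_neg at hc
      have := Nat.mul_le_mul_left (k - 1) hc
      omega
    have hc2 : c < s + 1 := by
      by_contra hc
      push_neg at hc
      have := Nat.mul_le_mul_left (k - 1) hc
      omega
    omega
  have hdiv : t / (k - 1) = s := Nat.div_eq_of_lt_le (by omega) (by omega)
  unfold Zv
  rw [if_neg hnd, hdiv]

lemma succ_mul_eq (s K : ℕ) : (s + 1) * K = s * K + K := by ring

lemma prodIcc (hk : 2 ≤ k) (s : ℕ) :
    ∏ t ∈ Finset.Icc (s * (k - 1)) ((s + 1) * (k - 1)), Zv k m t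
      = Uv k m s * Uv k m (s + 1) * Wv k m s ^ (k - 2) := by
  have hK : 0 < k - 1 := by omega
  set a := s * (k - 1) with ha
  set b := (s + 1) * (k - 1) with hb
  have hab' : b = a + (k - 1) := by rw [ha, hb]; ring
  have hab : a < b := by omega
  rw [← Finset.Ico_insert_right hab.le, ← Finset.Ioo_insert_left hab,
    Finset.prod_insert (by simp [Finset.mem_Ioo] <;> omega),
    Finset.prod_insert (by simp [Finset.mem_Ioo] <;> omega)]
  have hZa : Zv k m a = Uv k m s := Zv_joint hk s
  have hZb : Zv k m b = Uv k m (s + 1) := Zv_joint hk (s + 1)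
  have hprod : ∏ t ∈ Finset.Ioo a b, Zv k m t = Wv k m s ^ (k - 2) := by
    rw [Finset.prod_congr rfl (fun t ht => ?_), Finset.prod_const, Nat.card_Ioo]
    · congr 1
      omega
    · rw [Finset.mem_Ioo] at ht
      exact Zv_int hk ht.1 ht.2
  rw [hZa, hZb, hprod]
  ring

lemma prod_erase_val (hk : 2 ≤ k) {s : ℕ} (hs : s < m) (i : Fin (m * (k - 1) + 1))
    (hi : i ∈ edgeF k m s) :
    Zv k m (i : ℕ) * ∏ j ∈ (edgeF k m s).erase i, Zv k m (j : ℕ)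
      = Uv k m s * Uv k m (s + 1) * Wv k m s ^ (k - 2) := by
  have hinj : ∀ x ∈ (edgeF k m s).erase i, ∀ y ∈ (edgeF k m s).erase i,
      Fin.val x = Fin.val y → x = y := fun x _ y _ h => Fin.val_injective h
  have h1 : ∏ j ∈ (edgeF k m s).erase i, Zv k m (j : ℕ)
      = ∏ t ∈ (Finset.Icc (s * (k - 1)) ((s + 1) * (k - 1))).erase (i : ℕ), Zv k m t := by
    rw [← edgeF_image_val hs, ← Finset.image_erase Fin.val_injective,
      Finset.prod_image hinj]
  have hmem : (i : ℕ) ∈ Finset.Icc (s * (k - 1)) ((s + 1) * (k - 1)) := by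
    rw [Finset.mem_Icc]; exact mem_edgeF.mp hi
  rw [h1, Finset.mul_prod_erase _ _ hmem, prodIcc hk s]

lemma prodEL (hk : 2 ≤ k) (hm : 1 ≤ m) {s : ℕ} (hs : s < m) (i : Fin (m * (k - 1) + 1))
    (hi : (i : ℕ) = s * (k - 1)) :
    ∏ j ∈ (edgeF k m s).erase i, Zv k m (j : ℕ) = Uv k m (s + 1) * Wv k m s ^ (k - 2) := by
  have hU : 0 < Uv k m s := Uv_pos (by omega)
  have key := prod_erase_val hk hs i (by
    rw [mem_edgeF, hi]
    exact ⟨le_rfl, Nat.mul_le_mul_right _ (by omega)⟩)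
  rw [hi, Zv_joint hk s] at key
  apply mul_left_cancel₀ hU.ne'
  rw [key]; ring

lemma prodER (hk : 2 ≤ k) (hm : 1 ≤ m) {s : ℕ} (hs : s < m) (i : Fin (m * (k - 1) + 1))
    (hi : (i : ℕ) = (s + 1) * (k - 1)) :
    ∏ j ∈ (edgeF k m s).erase i, Zv k m (j : ℕ) = Uv k m s * Wv k m s ^ (k - 2) := by
  have hU : 0 < Uv k m (s + 1) := Uv_pos (by omega)
  have key := prod_erase_val hk hs i (by
    rw [mem_edgeF, hi]
    exact ⟨Nat.mul_le_mul_right _ (by omega), le_rfl⟩)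
  rw [hi, Zv_joint hk (s + 1)] at key
  apply mul_left_cancel₀ hU.ne'
  rw [key]; ring

lemma prodEI (hk : 2 ≤ k) (hm : 1 ≤ m) {s : ℕ} (hs : s < m) (i : Fin (m * (k - 1) + 1))
    (h1 : s * (k - 1) < (i : ℕ)) (h2 : (i : ℕ) < (s + 1) * (k - 1)) :
    ∏ j ∈ (edgeF k m s).erase i, Zv k m (j : ℕ)
      = Uv k m s * Uv k m (s + 1) * Wv k m s ^ (k - 3) := by
  have hk3 : 3 ≤ k := by
    by_contra hc
    have : k = 2 := by omega
    subst this
    simp only [show (2 : ℕ) - 1 = 1 from rfl, Nat.mul_one] at h1 h2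
    omega
  have hW : 0 < Wv k m s := Wv_pos (by omega)
  have key := prod_erase_val hk hs i (by rw [mem_edgeF]; omega)
  rw [Zv_int hk h1 h2] at key
  apply mul_left_cancel₀ hW.ne'
  rw [key]
  have hpow : Wv k m s * Wv k m s ^ (k - 3) = Wv k m s ^ (k - 2) := by
    rw [← pow_succ']
    congr 1
    omega
  calc Uv k m s * Uv k m (s + 1) * Wv k m s ^ (k - 2)
      = Uv k m s * Uv k m (s + 1) * (Wv k m s * Wv k m s ^ (k - 3)) := by rw [hpow]
    _ = Wv k m s * (Uv k m s * Uv k m (s + 1) * Wv k m s ^ (k - 3)) := by ring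

end Products

section Assemble
variable {k m : ℕ}

lemma Zv_pos (hk : 2 ≤ k) (hm : 1 ≤ m) {t : ℕ} (ht : t ≤ m * (k - 1)) :
    0 < Zv k m t := by
  have hK : 0 < k - 1 := by omega
  unfold Zv
  split_ifs with h
  · apply Uv_pos
    have h1 := Nat.div_le_div_right (c := k - 1) ht
    rw [Nat.mul_div_cancel m hK] at h1
    omega
  · apply Wv_pos
    have hlt : t < m * (k - 1) := by
      rcases Nat.lt_or_ge t (m * (k - 1)) with h' | h'
      · exact h'
      · exfalso; apply h
        have : t = m * (k - 1) := by omega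
        rw [this]; exact dvd_mul_left _ _
    have := Nat.div_lt_of_lt_mul (by rwa [Nat.mul_comm] at hlt)
    omega

/-- The real eigen-equation for the vector `Zv`. -/
lemma eig_real (hk : 2 ≤ k) (hm : 1 ≤ m) (i : Fin (m * (k - 1) + 1)) :
    ∑ s ∈ (Finset.range m).filter (fun s => i ∈ edgeF k m s),
        ∏ j ∈ (edgeF k m s).erase i, Zv k m (j : ℕ)
      = lamR k m * Zv k m (i : ℕ) ^ (k - 1) := by
  have hK : 0 < k - 1 := by omega
  by_cases hr : (i : ℕ) % (k - 1) = 0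
  · -- joint vertex
    set s0 := (i : ℕ) / (k - 1) with hs0
    have hdec0 : (i : ℕ) = s0 * (k - 1) + (i : ℕ) % (k - 1) := (Nat.div_add_mod' _ _).symm
    have hdec : (i : ℕ) = s0 * (k - 1) := by omega
    have hZ : Zv k m (i : ℕ) = Uv k m s0 := by rw [hdec]; exact Zv_joint hk s0
    have hi : (i : ℕ) ≤ m * (k - 1) := by have := i.isLt; omega
    have hdiv : s0 ≤ m := by
      have h1 := Nat.div_le_div_right (c := k - 1) hi
      rw [Nat.mul_div_cancel m hK] at h1
      omega
    rw [filter_joint hk i hm hr]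
    split_ifs with h1 h2
    · -- i = 0, s0 = 0
      have hs00 : s0 = 0 := by rw [hs0, h1]; simp
      rw [Finset.sum_singleton, prodEL hk hm hm i (by rw [h1]; simp), hZ, hs00]
      exact eigJ0 hk hm
    · -- i = m(k-1), s0 = m
      have hs0m : s0 = m := by
        rw [hs0, h2, Nat.mul_div_cancel m hK]
      rw [Finset.sum_singleton,
        prodER hk hm (s := m - 1) (by omega) i (by rw [h2]; congr 1; omega),
        hZ, hs0m]
      exact eigJm hk hm
    · -- middle joint
      have hs01 : 1 ≤ s0 := by
        rcases Nat.eq_zero_or_pos s0 with h | h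
        · exfalso; apply h1; rw [hdec, h, Nat.zero_mul]
        · exact h
      have hs0m : s0 < m := by
        rcases Nat.lt_or_ge s0 m with h | h
        · exact h
        · exfalso; apply h2
          have hsm : s0 = m := by omega
          rw [hdec, hsm]
      have hne : s0 - 1 ≠ s0 := by omega
      rw [Finset.sum_insert (by rw [Finset.mem_singleton, ← hs0]; exact hne), Finset.sum_singleton,
        prodER hk hm (s := s0 - 1) (by omega) i (by rw [hdec]; congr 1; omega),
        prodEL hk hm (s := s0) hs0m i hdec, hZ]
      exact eigJmid hk hm hs01 hs0m
  · -- interior vertex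
    set s0 := (i : ℕ) / (k - 1) with hs0
    have hrK : (i : ℕ) % (k - 1) < k - 1 := Nat.mod_lt _ hK
    have hdec0 : (i : ℕ) = s0 * (k - 1) + (i : ℕ) % (k - 1) := (Nat.div_add_mod' _ _).symm
    have hilt : (i : ℕ) < m * (k - 1) := by
      have h2 := i.isLt
      rcases Nat.lt_or_ge (i : ℕ) (m * (k - 1)) with h | h
      · exact h
      · exfalso; apply hr
        have : (i : ℕ) = m * (k - 1) := by omega
        rw [this, Nat.mul_mod_left]
    have hs0m : s0 < m := by
      rw [hs0]
      apply Nat.div_lt_of_lt_mul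
      rwa [Nat.mul_comm (k - 1) m]
    have hlow : s0 * (k - 1) < (i : ℕ) := by omega
    have hhigh : (i : ℕ) < (s0 + 1) * (k - 1) := by
      have : (s0 + 1) * (k - 1) = s0 * (k - 1) + (k - 1) := by ring
      omega
    have hZ : Zv k m (i : ℕ) = Wv k m s0 := Zv_int hk hlow hhigh
    rw [filter_interior hk i hr, Finset.sum_singleton,
      prodEI hk hm hs0m i hlow hhigh, hZ]
    have hk3 : 3 ≤ k := by
      by_contra hc
      have : k = 2 := by omega
      subst this
      omega
    exact eigInt hk3 hm (by omega)

end Assemble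
variable {k m : ℕ}

lemma hyperpath_eq : hyperpathEdges k m = (Finset.range m).image (edgeF k m) := rfl

lemma sum_edges {M : Type*} [AddCommMonoid M] (hk : 2 ≤ k) (i : Fin (m * (k - 1) + 1))
    (f : Finset (Fin (m * (k - 1) + 1)) → M) :
    ∑ e ∈ (hyperpathEdges k m).filter (fun e => i ∈ e), f e
      = ∑ s ∈ (Finset.range m).filter (fun s => i ∈ edgeF k m s), f (edgeF k m s) := by
  rw [hyperpath_eq, Finset.filter_image]
  refine Finset.sum_image ?_
  intro x hx y hy hxy
  exact edgeF_injOn hk (Finset.mem_coe.mpr (Finset.mem_of_mem_filter _ hx))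
    (Finset.mem_coe.mpr (Finset.mem_of_mem_filter _ hy)) hxy

lemma card_edgeF (hk : 2 ≤ k) {s : ℕ} (hs : s < m) : (edgeF k m s).card = k := by
  have h1 : ((edgeF k m s).image Fin.val).card = (edgeF k m s).card :=
    Finset.card_image_of_injective _ Fin.val_injective
  rw [← h1, edgeF_image_val hs, Nat.card_Icc]
  have : (s + 1) * (k - 1) = s * (k - 1) + (k - 1) := by ring
  omega

lemma lam_eq (hm : 1 ≤ m) :
    (4 * Real.cos (tv m) ^ 2) ^ ((1 : ℝ) / (k : ℝ)) = lamR k m := by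
  have h4 : 4 * Real.cos (tv m) ^ 2 = rhov m ^ (2 : ℕ) := by unfold rhov; ring
  rw [h4, ← Real.rpow_natCast (rhov m) 2, ← Real.rpow_mul (rhov_pos hm).le]
  unfold lamR
  norm_num [div_eq_mul_inv]

end S8



open S8 in
/-- For `k ≥ 2`, `m ≥ 1`, the spectral radius of `P_m^{(k)}` is `(4cos²(π/(m+2)))^{1/k}`:
this real number is an eigenvalue, and every eigenvalue has modulus at most this number. -/
theorem stmt8 (k m : ℕ) (hk : 2 ≤ k) (hm : 1 ≤ m) :
    IsHypEigenvalue (hyperpathEdges k m) k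
        (((4 * Real.cos (Real.pi / (m + 2)) ^ 2) ^ ((1 : ℝ) / k) : ℝ) : ℂ) ∧
      ∀ lam : ℂ, IsHypEigenvalue (hyperpathEdges k m) k lam →
        ‖lam‖ ≤ (4 * Real.cos (Real.pi / (m + 2)) ^ 2) ^ ((1 : ℝ) / k) := by
  constructor
  · refine ⟨fun j => ((Zv k m (j : ℕ) : ℝ) : ℂ), ?_, ?_⟩
    · intro h0
      have h1 := congrFun h0 0
      simp only [Pi.zero_apply, Complex.ofReal_eq_zero] at h1
      exact (Zv_pos hk hm (Nat.zero_le _ : ((0 : Fin (m * (k-1) + 1)) : ℕ) ≤ m * (k-1))).ne' h1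
    · intro i
      rw [sum_edges hk i (fun e => ∏ j ∈ e.erase i, ((Zv k m (j : ℕ) : ℝ) : ℂ))]
      have hstep : ∑ s ∈ (Finset.range m).filter (fun s => i ∈ edgeF k m s),
          ∏ j ∈ (edgeF k m s).erase i, ((Zv k m (j : ℕ) : ℝ) : ℂ)
          = (((lamR k m * Zv k m (i : ℕ) ^ (k - 1) : ℝ)) : ℂ) := by
        rw [← eig_real hk hm i]
        push_cast
        rfl
      rw [hstep]
      have hlam : ((4 * Real.cos (Real.pi / ((m : ℝ) + 2)) ^ 2) ^ ((1 : ℝ) / (k : ℝ)) : ℝ)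
          = lamR k m := lam_eq hm
      rw [hlam]
      push_cast
      ring
  · rintro lam ⟨x, hx0, hxe⟩
    obtain ⟨j0, hj0⟩ := Function.ne_iff.mp hx0
    simp only [Pi.zero_apply] at hj0
    have hZpos : ∀ i : Fin (m * (k - 1) + 1), 0 < Zv k m (i : ℕ) :=
      fun i => Zv_pos hk hm (by have := i.isLt; omega)
    obtain ⟨i0, -, hmax⟩ := Finset.exists_max_image Finset.univ
      (fun i : Fin (m * (k - 1) + 1) => ‖x i‖ / Zv k m (i : ℕ))
      ⟨0, Finset.mem_univ 0⟩
    set c := ‖x i0‖ / Zv k m (i0 : ℕ) with hc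
    have hble : ∀ j, ‖x j‖ ≤ c * Zv k m (j : ℕ) := by
      intro j
      have h := hmax j (Finset.mem_univ j)
      rw [div_le_iff₀ (hZpos j)] at h
      exact h
    have hcpos : 0 < c := by
      have h1 : 0 < ‖x j0‖ / Zv k m (j0 : ℕ) :=
        div_pos (norm_pos_iff.mpr hj0) (hZpos j0)
      exact lt_of_lt_of_le h1 (hmax j0 (Finset.mem_univ j0))
    have hxi0 : ‖x i0‖ = c * Zv k m (i0 : ℕ) := by
      rw [hc, div_mul_cancel₀ _ (hZpos i0).ne']
    have habs : ‖lam‖ * ‖x i0‖ ^ (k - 1)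
        ≤ c ^ (k - 1) * (lamR k m * Zv k m (i0 : ℕ) ^ (k - 1)) := by
      have key := hxe i0
      calc ‖lam‖ * ‖x i0‖ ^ (k - 1)
          = ‖lam * x i0 ^ (k - 1)‖ := by rw [norm_mul, norm_pow]
        _ = ‖∑ s ∈ (Finset.range m).filter (fun s => i0 ∈ edgeF k m s),
              ∏ j ∈ (edgeF k m s).erase i0, x j‖ := by
            rw [← key, sum_edges hk i0 (fun e => ∏ j ∈ e.erase i0, x j)]
        _ ≤ ∑ s ∈ (Finset.range m).filter (fun s => i0 ∈ edgeF k m s),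
              ‖∏ j ∈ (edgeF k m s).erase i0, x j‖ :=
            norm_sum_le _ _
        _ = ∑ s ∈ (Finset.range m).filter (fun s => i0 ∈ edgeF k m s),
              ∏ j ∈ (edgeF k m s).erase i0, ‖x j‖ := by
            refine Finset.sum_congr rfl fun s _ => ?_
            exact norm_prod _ _
        _ ≤ ∑ s ∈ (Finset.range m).filter (fun s => i0 ∈ edgeF k m s),
              c ^ (k - 1) * ∏ j ∈ (edgeF k m s).erase i0, Zv k m (j : ℕ) := by
            refine Finset.sum_le_sum fun s hsmem => ?_
            rw [Finset.mem_filter, Finset.mem_range] at hsmem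
            have hcard : ((edgeF k m s).erase i0).card = k - 1 := by
              rw [Finset.card_erase_of_mem hsmem.2, card_edgeF hk hsmem.1]
            calc ∏ j ∈ (edgeF k m s).erase i0, ‖x j‖
                ≤ ∏ j ∈ (edgeF k m s).erase i0, (c * Zv k m (j : ℕ)) :=
                  Finset.prod_le_prod (fun j _ => norm_nonneg _)
                    (fun j _ => hble j)
              _ = c ^ (k - 1) * ∏ j ∈ (edgeF k m s).erase i0, Zv k m (j : ℕ) := by
                  rw [Finset.prod_mul_distrib, Finset.prod_const, hcard]
        _ = c ^ (k - 1) * ∑ s ∈ (Finset.range m).filter (fun s => i0 ∈ edgeF k m s),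
              ∏ j ∈ (edgeF k m s).erase i0, Zv k m (j : ℕ) := by
            rw [Finset.mul_sum]
        _ = c ^ (k - 1) * (lamR k m * Zv k m (i0 : ℕ) ^ (k - 1)) := by
            rw [eig_real hk hm i0]
    rw [hxi0, mul_pow] at habs
    have hrearr : c ^ (k - 1) * (lamR k m * Zv k m (i0 : ℕ) ^ (k - 1))
        = lamR k m * (c ^ (k - 1) * Zv k m (i0 : ℕ) ^ (k - 1)) := by ring
    have hpos : 0 < c ^ (k - 1) * Zv k m (i0 : ℕ) ^ (k - 1) := by
      have := hZpos i0
      positivity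
    have hfin : ‖lam‖ ≤ lamR k m := by
      have h2 : ‖lam‖ * (c ^ (k - 1) * Zv k m (i0 : ℕ) ^ (k - 1))
          ≤ lamR k m * (c ^ (k - 1) * Zv k m (i0 : ℕ) ^ (k - 1)) := by
        rw [← hrearr]
        calc ‖lam‖ * (c ^ (k - 1) * Zv k m (i0 : ℕ) ^ (k - 1))
            = ‖lam‖ * (c * Zv k m (i0 : ℕ)) ^ (k - 1) := by rw [mul_pow]
          _ ≤ _ := by rw [mul_pow]; exact habs
      exact le_of_mul_le_mul_right h2 hpos
    have hlam : ((4 * Real.cos (Real.pi / ((m : ℝ) + 2)) ^ 2) ^ ((1 : ℝ) / (k : ℝ)) : ℝ)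
        = lamR k m := lam_eq hm
    rw [hlam]
    exact hfin
end

section
/- Let k ≥ 2 and m ≥ 1. If λ is an eigenvalue of the adjacency tensor of the k-uniform hyperpath P_m^{(k)} and ω ∈ ℂ satisfies ω^k = 1, then ω·λ is also an eigenvalue of P_m^{(k)} (the spectrum of the hyperpath is k-symmetric). -/
lemma edge_sum_c (k m : ℕ) (hk : 2 ≤ k) {s : ℕ} (hs : s < m) :
    ∑ j ∈ (Finset.univ.filter fun i : Fin (m * (k - 1) + 1) =>
        s * (k - 1) ≤ (i : ℕ) ∧ (i : ℕ) ≤ (s + 1) * (k - 1)),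
      (if (k-1) ∣ (j:ℕ) ∧ Odd ((j:ℕ)/(k-1)) then (1:ℕ) else 0) = 1 := by
  have hk1 : 0 < k - 1 := by omega
  set t : ℕ := if Odd s then s else s + 1 with ht
  have hto : Odd t := by
    rcases Nat.even_or_odd s with he | ho
    · simp [ht, Nat.not_odd_iff_even.2 he, Even.add_one he]
    · simp [ht, ho]
  have htle : t ≤ s + 1 := by rw [ht]; split <;> omega
  have htge : s ≤ t := by rw [ht]; split <;> omega
  have htlt : t * (k - 1) < m * (k - 1) + 1 :=
    Nat.lt_succ_of_le (Nat.mul_le_mul_right _ (by omega))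
  set a : Fin (m * (k - 1) + 1) := ⟨t * (k - 1), htlt⟩ with ha
  rw [Finset.sum_congr rfl (fun j hj => ?_), Finset.sum_ite_eq' _ a (fun _ => (1:ℕ))]
  · simp only [Finset.mem_filter, Finset.mem_univ, true_and]
    rw [if_pos ⟨Nat.mul_le_mul_right _ htge, Nat.mul_le_mul_right _ htle⟩]
  · simp only [Finset.mem_filter, Finset.mem_univ, true_and] at hj
    by_cases hja : j = a
    · subst hja
      rw [if_pos, if_pos rfl]
      refine ⟨dvd_mul_left _ _, ?_⟩
      show Odd (t * (k-1) / (k-1))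
      simpa [Nat.mul_div_cancel _ hk1] using hto
    · rw [if_neg hja, if_neg]
      rintro ⟨⟨q, hq⟩, hodd⟩
      have hq' : (j : ℕ) = q * (k - 1) := by rw [hq, Nat.mul_comm]
      have hqs : s ≤ q := by
        have h1 := hj.1; rw [hq'] at h1
        exact Nat.le_of_mul_le_mul_right h1 hk1
      have hqs' : q ≤ s + 1 := by
        have h1 := hj.2; rw [hq'] at h1
        exact Nat.le_of_mul_le_mul_right h1 hk1
      rw [hq', Nat.mul_div_cancel _ hk1] at hodd
      have hqt : q = t := by
        rw [ht]
        rcases Nat.even_or_odd s with he | ho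
        · simp only [Nat.not_odd_iff_even.2 he, if_false]
          rcases Nat.eq_or_lt_of_le hqs with h1 | _
          · exact absurd (h1 ▸ he) (Nat.not_even_iff_odd.2 hodd)
          · omega
        · simp only [ho, if_true]
          rcases Nat.eq_or_lt_of_le hqs with h1 | h1
          · omega
          · have hq1 : q = s + 1 := by omega
            subst hq1
            exact absurd hodd (Nat.not_odd_iff_even.2 (Odd.add_one ho))
      exact absurd (Fin.ext (by rw [hq', hqt])) hja


/-- The spectrum of the hyperpath is `k`-symmetric: if `λ` is an eigenvalue of
`P_m^{(k)}` and `ω^k = 1`, then `ω λ` is also an eigenvalue. -/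
theorem stmt9 (k m : ℕ) (hk : 2 ≤ k) (hm : 1 ≤ m) (lam ω : ℂ) (hω : ω ^ k = 1)
    (h : IsHypEigenvalue (hyperpathEdges k m) k lam) :
    IsHypEigenvalue (hyperpathEdges k m) k (ω * lam) := by
  obtain ⟨x, hx, hxe⟩ := h
  have hω0 : ω ≠ 0 := by
    intro h0; rw [h0, zero_pow (by omega)] at hω; exact zero_ne_one hω
  set c : ℕ → ℕ := fun i => if (k-1) ∣ i ∧ Odd (i / (k-1)) then 1 else 0 with hc
  have hc01 : ∀ i, c i = 0 ∨ c i = 1 := by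
    intro i
    by_cases hdi : (k-1) ∣ i ∧ Odd (i / (k-1))
    · right; simp [hc, hdi]
    · left; simp [hc, hdi]
  refine ⟨fun i => ω ^ c (i : ℕ) * x i, ?_, ?_⟩
  · obtain ⟨i, hi⟩ := Function.ne_iff.1 hx
    exact Function.ne_iff.2 ⟨i, mul_ne_zero (pow_ne_zero _ hω0) hi⟩
  · intro i
    have key : ∀ e ∈ (hyperpathEdges k m).filter (fun e => i ∈ e),
        ∏ j ∈ e.erase i, (ω ^ c (j : ℕ) * x j)
          = ω ^ (1 - c (i : ℕ)) * ∏ j ∈ e.erase i, x j := by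
      intro e he
      rw [Finset.mem_filter] at he
      obtain ⟨hee, hie⟩ := he
      obtain ⟨s, hs, rfl⟩ := Finset.mem_image.1 hee
      rw [Finset.mem_range] at hs
      have hsum : ∑ j ∈ (Finset.univ.filter fun i : Fin (m * (k - 1) + 1) =>
          s * (k - 1) ≤ (i : ℕ) ∧ (i : ℕ) ≤ (s + 1) * (k - 1)), c (j : ℕ) = 1 :=
        edge_sum_c k m hk hs
      rw [← Finset.add_sum_erase _ (fun j : Fin (m*(k-1)+1) => c (j : ℕ)) hie] at hsum
      have herase : ∑ j ∈ ((Finset.univ.filter fun i : Fin (m * (k - 1) + 1) =>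
          s * (k - 1) ≤ (i : ℕ) ∧ (i : ℕ) ≤ (s + 1) * (k - 1)).erase i), c (j : ℕ)
          = 1 - c (i : ℕ) := by omega
      rw [Finset.prod_mul_distrib, Finset.prod_pow_eq_pow_sum, herase]
    rw [Finset.sum_congr rfl key, ← Finset.mul_sum, hxe i]
    show ω ^ (1 - c (i:ℕ)) * (lam * x i ^ (k-1)) = ω * lam * (ω ^ c (i:ℕ) * x i) ^ (k-1)
    have hkk : ω * ω ^ (k - 1) = 1 := by
      rw [← pow_succ', show k - 1 + 1 = k by omega, hω]
    rcases hc01 (i : ℕ) with h0 | h1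
    · rw [h0]; ring
    · rw [h1]
      calc ω ^ (1 - 1) * (lam * x i ^ (k - 1)) = lam * x i ^ (k - 1) := by simp
        _ = (ω * ω ^ (k - 1)) * (lam * x i ^ (k - 1)) := by rw [hkk, one_mul]
        _ = ω * lam * (ω ^ 1 * x i) ^ (k - 1) := by rw [mul_pow]; ring
end

section
/- Fix k ≥ 2, and for each m ≥ 1 let ρ_m denote the spectral radius of the k-uniform hyperpath P_m^{(k)}, i.e., the maximum of |λ| over all eigenvalues λ of the adjacency tensor of P_m^{(k)}. Then ρ_m = (2·cos(π/(m+2)))^{2/k} for every m ≥ 1, and ρ_m tends to 4^{1/k} as m → ∞. -/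
open Real Finset


noncomputable def pY (m t : ℕ) : ℝ := Real.sin (t * (Real.pi / (m + 2)))
noncomputable def pmu (m : ℕ) : ℝ := 2 * Real.cos (Real.pi / (m + 2))

lemma pY_rec (m t : ℕ) : pY m t + pY m (t + 2) = pmu m * pY m (t + 1) := by
  unfold pY pmu
  push_cast
  rw [show ((t:ℝ)) * (Real.pi / (m + 2)) = ((t:ℝ)+1) * (Real.pi / (m + 2)) - (Real.pi/(m+2)) by ring,
    show ((t:ℝ)+2) * (Real.pi / (m + 2)) = ((t:ℝ)+1) * (Real.pi / (m + 2)) + (Real.pi/(m+2)) by ring,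
    Real.sin_sub, Real.sin_add]
  ring

lemma pY_zero (m : ℕ) : pY m 0 = 0 := by simp [pY]

lemma pY_top (m : ℕ) : pY m (m + 2) = 0 := by
  unfold pY
  rw [show ((m+2:ℕ):ℝ) * (Real.pi / (m + 2)) = Real.pi by push_cast; field_simp]
  exact Real.sin_pi

lemma pY_pos (m t : ℕ) (h1 : 1 ≤ t) (h2 : t ≤ m + 1) : 0 < pY m t := by
  have hm2 : (0:ℝ) < (m:ℝ) + 2 := by positivity
  have ht : (1:ℝ) ≤ (t:ℝ) := by exact_mod_cast h1
  apply Real.sin_pos_of_pos_of_lt_pi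
  · have : (0:ℝ) < (t:ℝ) := by linarith
    positivity
  · have ht2 : (t:ℝ) < (m:ℝ) + 2 := by
      have : (t:ℝ) ≤ (m:ℝ) + 1 := by exact_mod_cast h2
      linarith
    calc (t:ℝ) * (Real.pi / (m + 2)) < ((m:ℝ)+2) * (Real.pi / (m + 2)) := by
          apply mul_lt_mul_of_pos_right ht2; positivity
      _ = Real.pi := by field_simp

lemma pmu_pos (m : ℕ) (hm : 1 ≤ m) : 0 < pmu m := by
  unfold pmu
  have h1 : 0 < Real.pi / (m + 2) := by positivity
  have h2 : Real.pi / (m + 2) < Real.pi / 2 := by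
    apply div_lt_div_of_pos_left Real.pi_pos (by norm_num)
    have : (1:ℝ) ≤ (m:ℝ) := by exact_mod_cast hm
    linarith
  have := Real.cos_pos_of_mem_Ioo (show Real.pi / (m+2) ∈ Set.Ioo (-(Real.pi/2)) (Real.pi/2) from ⟨by linarith, h2⟩)
  linarith


def Ed (k m s : ℕ) : Finset (Fin (m * (k - 1) + 1)) :=
  Finset.univ.filter fun i => s * (k - 1) ≤ (i : ℕ) ∧ (i : ℕ) ≤ (s + 1) * (k - 1)

lemma mem_Ed {k m s : ℕ} {i : Fin (m * (k-1) + 1)} :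
    i ∈ Ed k m s ↔ s * (k - 1) ≤ (i : ℕ) ∧ (i : ℕ) ≤ (s + 1) * (k - 1) := by
  simp [Ed]

lemma image_Ed (k m s : ℕ) (hs : s < m) :
    (Ed k m s).image (Fin.val) = Finset.Icc (s*(k-1)) ((s+1)*(k-1)) := by
  have hle : (s+1)*(k-1) ≤ m*(k-1) := Nat.mul_le_mul_right _ (by omega)
  ext t
  simp only [Finset.mem_image, mem_Ed, Finset.mem_Icc]
  constructor
  · rintro ⟨j, hj, rfl⟩; exact hj
  · rintro ⟨h1, h2⟩; exact ⟨⟨t, by omega⟩, ⟨h1, h2⟩, rfl⟩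

lemma prod_Ed {M : Type*} [CommMonoid M] (k m s : ℕ) (hs : s < m) (f : ℕ → M) :
    ∏ j ∈ Ed k m s, f (j : ℕ) = ∏ t ∈ Finset.Icc (s*(k-1)) ((s+1)*(k-1)), f t := by
  rw [← image_Ed k m s hs, Finset.prod_image (fun a _ b _ h => Fin.val_injective h)]

lemma card_Ed (k m s : ℕ) (hk : 2 ≤ k) (hs : s < m) : (Ed k m s).card = k := by
  have := image_Ed k m s hs
  have h2 : ((Ed k m s).image Fin.val).card = (Ed k m s).card :=
    Finset.card_image_of_injective _ Fin.val_injective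
  rw [this, Nat.card_Icc] at h2
  have he : (s+1)*(k-1) = s*(k-1) + (k-1) := by ring
  omega

lemma Ed_injOn (k m : ℕ) (hk : 2 ≤ k) : Set.InjOn (Ed k m) (Finset.range m) := by
  intro a ha b hb h
  simp only [Finset.coe_range, Set.mem_Iio] at ha hb
  have h2 := congrArg (fun E => Finset.image Fin.val E) h
  simp only [image_Ed k m a ha, image_Ed k m b hb] at h2
  have hK : 0 < k - 1 := by omega
  have ha2 : a * (k-1) ∈ Finset.Icc (b*(k-1)) ((b+1)*(k-1)) := by
    rw [← h2]; simp [Finset.mem_Icc]; exact Nat.mul_le_mul_right _ (by omega)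
  have hb2 : b * (k-1) ∈ Finset.Icc (a*(k-1)) ((a+1)*(k-1)) := by
    rw [h2]; simp [Finset.mem_Icc]; exact Nat.mul_le_mul_right _ (by omega)
  simp only [Finset.mem_Icc] at ha2 hb2
  have h4 : b ≤ a := Nat.le_of_mul_le_mul_right ha2.1 hK
  have h5 : a ≤ b := Nat.le_of_mul_le_mul_right hb2.1 hK
  omega

noncomputable def pA (k m s : ℕ) : ℝ := pY m (s+1) ^ ((2:ℝ)/k)
noncomputable def pZ (k m s : ℕ) : ℝ := pmu m ^ (-(1:ℝ)/k) * (pY m (s+1) * pY m (s+2)) ^ ((1:ℝ)/k)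
noncomputable def pQ (k m s : ℕ) : ℝ := pmu m ^ ((2:ℝ)/k - 1) * (pY m (s+1) * pY m (s+2))
noncomputable def pW (k m t : ℕ) : ℝ :=
  if (k-1) ∣ t then pA k m (t/(k-1)) else pZ k m (t/(k-1))


lemma pA_pos (k m s : ℕ) (hs : s ≤ m) : 0 < pA k m s :=
  Real.rpow_pos_of_pos (pY_pos m (s+1) (by omega) (by omega)) _

lemma pZ_pos (k m s : ℕ) (hm : 1 ≤ m) (hs : s + 1 ≤ m) : 0 < pZ k m s := by
  have h1 := pY_pos m (s+1) (by omega) (by omega)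
  have h2 := pY_pos m (s+2) (by omega) (by omega)
  have hu := pmu_pos m hm
  unfold pZ
  positivity

lemma pW_joint (k m s : ℕ) (hk : 2 ≤ k) : pW k m (s * (k-1)) = pA k m s := by
  have hK : 0 < k - 1 := by omega
  unfold pW
  rw [if_pos (Dvd.intro_left s rfl), Nat.mul_div_cancel s hK]

lemma pW_int (k m s t : ℕ) (hk : 2 ≤ k) (h1 : s*(k-1) < t) (h2 : t < (s+1)*(k-1)) :
    pW k m t = pZ k m s := by
  have hK : 0 < k - 1 := by omega
  have he : (s+1)*(k-1) = s*(k-1) + (k-1) := by ring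
  have hnd : ¬ (k-1) ∣ t := by
    rintro ⟨c, rfl⟩
    have hc1 : s < c := by
      have : (k-1) * s < (k-1) * c := by
        calc (k-1)*s = s*(k-1) := by ring
        _ < (k-1)*c := h1
      exact Nat.lt_of_mul_lt_mul_left this
    have hc2 : c < s + 1 := by
      have : (k-1) * c < (k-1) * (s+1) := by
        calc (k-1)*c = (k-1)*c := rfl
        _ < (s+1)*(k-1) := h2
        _ = (k-1)*(s+1) := by ring
      exact Nat.lt_of_mul_lt_mul_left this
    omega
  have hdiv : t / (k-1) = s := Nat.div_eq_of_lt_le (le_of_lt h1) (by omega)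
  unfold pW
  rw [if_neg hnd, hdiv]

lemma prod_W_Icc (k m s : ℕ) (hk : 2 ≤ k) (hm : 1 ≤ m) (hs : s < m) :
    ∏ t ∈ Finset.Icc (s*(k-1)) ((s+1)*(k-1)), pW k m t
      = pA k m s * pZ k m s ^ (k-2) * pA k m (s+1) := by
  have hK : 0 < k - 1 := by omega
  have he : (s+1)*(k-1) = s*(k-1) + (k-1) := by ring
  set l := s*(k-1) with hl
  have hsplit : Finset.Icc l ((s+1)*(k-1)) = insert l (insert (l + (k-1)) (Finset.Ioo l (l + (k-1)))) := by
    ext t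
    simp only [Finset.mem_Icc, Finset.mem_insert, Finset.mem_Ioo]
    omega
  rw [hsplit, Finset.prod_insert (by simp [Finset.mem_Ioo]; omega),
    Finset.prod_insert (by simp [Finset.mem_Ioo])]
  have hIoo : ∏ t ∈ Finset.Ioo l (l + (k-1)), pW k m t = pZ k m s ^ (k-2) := by
    rw [Finset.prod_congr rfl (fun t ht => ?_), Finset.prod_const, Nat.card_Ioo]
    · congr 1; omega
    · simp only [Finset.mem_Ioo] at ht
      exact pW_int k m s t hk ht.1 (by omega)
  rw [hIoo, pW_joint k m s hk, show l + (k-1) = (s+1)*(k-1) by omega, pW_joint k m (s+1) hk]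
  ring

noncomputable def pLam (k m : ℕ) : ℝ := pmu m ^ ((2:ℝ)/k)

lemma kR_ne (k : ℕ) (hk : 2 ≤ k) : (k:ℝ) ≠ 0 := by
  have : 0 < k := by omega
  exact_mod_cast this.ne'

lemma prodAlg (k m s : ℕ) (hk : 2 ≤ k) (hm : 1 ≤ m) (hs : s + 1 ≤ m) :
    pA k m s * pZ k m s ^ (k - 2) * pA k m (s+1) = pQ k m s := by
  have hy1 : 0 < pY m (s+1) := pY_pos m (s+1) (by omega) (by omega)
  have hy2 : 0 < pY m (s+2) := pY_pos m (s+2) (by omega) (by omega)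
  have hu : 0 < pmu m := pmu_pos m hm
  have hk0 := kR_ne k hk
  unfold pA pZ pQ
  have hL : 0 < pY m (s+1) ^ ((2:ℝ)/k) * (pmu m ^ (-(1:ℝ)/k) * (pY m (s+1) * pY m (s+2)) ^ ((1:ℝ)/k)) ^ (k - 2) * pY m (s+2) ^ ((2:ℝ)/k) := by positivity
  have hR : 0 < pmu m ^ ((2:ℝ)/k - 1) * (pY m (s+1) * pY m (s+2)) := by positivity
  rw [← Real.exp_log hL, ← Real.exp_log hR]
  congr 1
  have hc : ((k - 2 : ℕ) : ℝ) = (k : ℝ) - 2 := by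
    have : (2:ℕ) ≤ k := hk
    push_cast [this]; ring
  rw [Real.log_mul (by positivity) (by positivity), Real.log_mul (by positivity) (by positivity),
    Real.log_mul (by positivity) (by positivity), Real.log_pow,
    Real.log_mul (by positivity) (by positivity),
    Real.log_rpow hu, Real.log_rpow hu, Real.log_rpow hy1, Real.log_rpow hy2,
    Real.log_rpow (by positivity), Real.log_mul hy1.ne' hy2.ne', hc]
  field_simp
  ring

lemma keyInt (k m s : ℕ) (hk : 2 ≤ k) (hm : 1 ≤ m) (hs : s + 1 ≤ m) :
    pQ k m s = pLam k m * pZ k m s ^ k := by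
  have hy1 : 0 < pY m (s+1) := pY_pos m (s+1) (by omega) (by omega)
  have hy2 : 0 < pY m (s+2) := pY_pos m (s+2) (by omega) (by omega)
  have hu : 0 < pmu m := pmu_pos m hm
  have hk0 := kR_ne k hk
  unfold pQ pLam pZ
  have hL : 0 < pmu m ^ ((2:ℝ)/k - 1) * (pY m (s+1) * pY m (s+2)) := by positivity
  have hR : 0 < pmu m ^ ((2:ℝ)/k) * (pmu m ^ (-(1:ℝ)/k) * (pY m (s+1) * pY m (s+2)) ^ ((1:ℝ)/k)) ^ k := by positivity
  rw [← Real.exp_log hL, ← Real.exp_log hR]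
  congr 1
  simp only [Real.log_mul (by positivity : pmu m ^ ((2:ℝ)/k) ≠ 0)
      (by positivity : (pmu m ^ (-(1:ℝ)/k) * (pY m (s+1) * pY m (s+2)) ^ ((1:ℝ)/k)) ^ k ≠ 0),
    Real.log_pow,
    Real.log_mul (by positivity : pmu m ^ (-(1:ℝ)/k) ≠ 0)
      (by positivity : (pY m (s+1) * pY m (s+2)) ^ ((1:ℝ)/k) ≠ 0),
    Real.log_mul (by positivity : pmu m ^ ((2:ℝ)/k - 1) ≠ 0)
      (by positivity : pY m (s+1) * pY m (s+2) ≠ 0),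
    Real.log_rpow hu, Real.log_rpow (by positivity : (0:ℝ) < pY m (s+1) * pY m (s+2)),
    Real.log_mul hy1.ne' hy2.ne']
  field_simp
  ring

lemma pA_pow (k m s : ℕ) (hk : 2 ≤ k) (hs : s ≤ m) : pA k m s ^ k = pY m (s+1) ^ 2 := by
  have hy : 0 < pY m (s+1) := pY_pos m (s+1) (by omega) (by omega)
  have hk0 := kR_ne k hk
  unfold pA
  rw [← Real.rpow_natCast (pY m (s+1) ^ ((2:ℝ)/k)) k, ← Real.rpow_mul hy.le]
  rw [show (2:ℝ)/k * k = 2 by field_simp]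
  rw [show ((2:ℝ)) = ((2:ℕ):ℝ) by norm_num, Real.rpow_natCast]

lemma keyJoint (k m s : ℕ) (hk : 2 ≤ k) (hm : 1 ≤ m) (hs : s ≤ m) :
    pmu m ^ ((2:ℝ)/k - 1) * (pY m s * pY m (s+1))
      + pmu m ^ ((2:ℝ)/k - 1) * (pY m (s+1) * pY m (s+2))
      = pLam k m * pA k m s ^ k := by
  have hu : 0 < pmu m := pmu_pos m hm
  have hk0 := kR_ne k hk
  rw [pA_pow k m s hk hs]
  have h1 : pmu m ^ ((2:ℝ)/k - 1) * (pY m s * pY m (s+1))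
      + pmu m ^ ((2:ℝ)/k - 1) * (pY m (s+1) * pY m (s+2))
      = pmu m ^ ((2:ℝ)/k - 1) * ((pY m s + pY m (s+2)) * pY m (s+1)) := by ring
  rw [h1, pY_rec m s]
  have h2 : pmu m ^ ((2:ℝ)/k - 1) * pmu m = pLam k m := by
    unfold pLam
    nth_rewrite 2 [← Real.rpow_one (pmu m)]
    rw [← Real.rpow_add hu]
    norm_num
  calc pmu m ^ ((2:ℝ)/k - 1) * (pmu m * pY m (s+1) * pY m (s+1))
      = (pmu m ^ ((2:ℝ)/k - 1) * pmu m) * pY m (s+1)^2 := by ring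
    _ = pLam k m * pY m (s+1)^2 := by rw [h2]

def Filt (k m : ℕ) (i : Fin (m * (k-1) + 1)) : Finset ℕ :=
  (Finset.range m).filter (fun s => i ∈ Ed k m s)

lemma mem_Filt {k m : ℕ} {i : Fin (m * (k-1) + 1)} {s : ℕ} :
    s ∈ Filt k m i ↔ s < m ∧ s * (k - 1) ≤ (i : ℕ) ∧ (i : ℕ) ≤ (s + 1) * (k - 1) := by
  simp [Filt, mem_Ed, Finset.mem_filter, Finset.mem_range, and_assoc]

-- arithmetic helpers
lemma cond1 {K s t : ℕ} (hK : 0 < K) : s * K ≤ t ↔ s ≤ t / K := by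
  rw [Nat.le_div_iff_mul_le hK]

lemma cond2 {K s t : ℕ} (hK : 0 < K) :
    t ≤ (s+1) * K ↔ (t / K ≤ s ∨ (K ∣ t ∧ t / K = s + 1)) := by
  have hmod := Nat.div_add_mod t K
  have hlt : t % K < K := Nat.mod_lt _ hK
  have hcomm : (s+1) * K = K * (s+1) := by ring
  constructor
  · intro h
    rcases Nat.lt_or_ge (t / K) (s+1) with h1 | h1
    · left; omega
    · right
      have h2 : K * (s+1) ≤ K * (t / K) := Nat.mul_le_mul_left K h1
      have hr : t % K = 0 ∧ K * (t / K) = K * (s+1) := by omega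
      have hq : t / K = s + 1 := Nat.eq_of_mul_eq_mul_left hK hr.2
      exact ⟨⟨t / K, by omega⟩, hq⟩
  · rintro (h | ⟨hd, hq⟩)
    · have h2 : K * (t / K + 1) ≤ K * (s+1) := Nat.mul_le_mul_left K (by omega)
      have h3 : K * (t / K + 1) = K * (t / K) + K := by ring
      omega
    · obtain ⟨c, rfl⟩ := hd
      have : c = s + 1 := by
        rw [Nat.mul_div_cancel_left c hK] at hq; omega
      rw [this, mul_comm]
lemma pW_pos (k m t : ℕ) (hk : 2 ≤ k) (hm : 1 ≤ m) (ht : t ≤ m * (k-1)) :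
    0 < pW k m t := by
  have hK : 0 < k - 1 := by omega
  unfold pW
  split_ifs with hd
  · apply pA_pos
    calc t / (k-1) ≤ m * (k-1) / (k-1) := Nat.div_le_div_right ht
    _ = m := Nat.mul_div_cancel m hK
  · apply pZ_pos k m _ hm
    have htm : t < m * (k-1) := by
      rcases Nat.lt_or_ge t (m * (k-1)) with h | h
      · exact h
      · exfalso; exact hd (by rw [show t = m * (k-1) by omega]; exact Dvd.intro_left m rfl)
    have : t / (k-1) < m := (Nat.div_lt_iff_lt_mul hK).2 (by omega)
    omega

lemma Filt_nd (k m : ℕ) (hk : 2 ≤ k) (hm : 1 ≤ m) (i : Fin (m * (k-1) + 1))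
    (hnd : ¬ (k-1) ∣ (i:ℕ)) : Filt k m i = {(i:ℕ)/(k-1)} := by
  have hK : 0 < k - 1 := by omega
  have hi : (i:ℕ) ≤ m * (k-1) := by omega
  have him : (i:ℕ) < m * (k-1) := by
    rcases Nat.lt_or_ge (i:ℕ) (m * (k-1)) with h | h
    · exact h
    · exfalso; exact hnd (by rw [show (i:ℕ) = m * (k-1) by omega]; exact Dvd.intro_left m rfl)
  have hqm : (i:ℕ)/(k-1) < m := (Nat.div_lt_iff_lt_mul hK).2 (by omega)
  ext s
  rw [mem_Filt, cond1 hK, cond2 hK, Finset.mem_singleton]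
  constructor
  · rintro ⟨h1, h2, (h3 | ⟨hd, -⟩)⟩
    · omega
    · exact absurd hd hnd
  · rintro rfl
    exact ⟨hqm, le_rfl, Or.inl le_rfl⟩

lemma Filt_d0 (k m : ℕ) (hk : 2 ≤ k) (hm : 1 ≤ m) (i : Fin (m * (k-1) + 1))
    (hi0 : (i:ℕ) = 0) : Filt k m i = {0} := by
  have hK : 0 < k - 1 := by omega
  ext s
  rw [mem_Filt, cond1 hK, cond2 hK, Finset.mem_singleton, hi0]
  rw [Nat.zero_div]
  constructor
  · rintro ⟨h1, h2, -⟩; omega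
  · rintro rfl; exact ⟨by omega, le_rfl, Or.inl (Nat.zero_le _)⟩

lemma Filt_dm (k m : ℕ) (hk : 2 ≤ k) (hm : 1 ≤ m) (i : Fin (m * (k-1) + 1))
    (him : (i:ℕ) = m * (k-1)) : Filt k m i = {m-1} := by
  have hK : 0 < k - 1 := by omega
  have hdiv : (i:ℕ)/(k-1) = m := by rw [him]; exact Nat.mul_div_cancel m hK
  ext s
  rw [mem_Filt, cond1 hK, cond2 hK, Finset.mem_singleton, hdiv]
  constructor
  · rintro ⟨h1, h2, (h3 | ⟨-, h4⟩)⟩ <;> omega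
  · rintro rfl
    refine ⟨by omega, by omega, Or.inr ⟨by rw [him]; exact Dvd.intro_left m rfl, by omega⟩⟩

lemma Filt_dq (k m q : ℕ) (hk : 2 ≤ k) (hm : 1 ≤ m) (i : Fin (m * (k-1) + 1))
    (hq : (i:ℕ) = q * (k-1)) (hq1 : 1 ≤ q) (hqm : q < m) :
    Filt k m i = {q - 1, q} := by
  have hK : 0 < k - 1 := by omega
  have hdiv : (i:ℕ)/(k-1) = q := by rw [hq]; exact Nat.mul_div_cancel q hK
  ext s
  rw [mem_Filt, cond1 hK, cond2 hK, Finset.mem_insert, Finset.mem_singleton, hdiv]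
  constructor
  · rintro ⟨h1, h2, (h3 | ⟨-, h4⟩)⟩ <;> omega
  · rintro (rfl | rfl)
    · exact ⟨by omega, by omega, Or.inr ⟨by rw [hq]; exact Dvd.intro_left q rfl, by omega⟩⟩
    · exact ⟨hqm, le_rfl, Or.inl le_rfl⟩

lemma prod_Ed_Q (k m s : ℕ) (hk : 2 ≤ k) (hm : 1 ≤ m) (hs : s < m) :
    ∏ j ∈ Ed k m s, pW k m (j:ℕ) = pQ k m s := by
  rw [prod_Ed k m s hs, prod_W_Icc k m s hk hm hs, prodAlg k m s hk hm (by omega)]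

lemma prod_erase_Ed (k m s : ℕ) (hk : 2 ≤ k) (hm : 1 ≤ m) (hs : s < m)
    {i : Fin (m * (k-1) + 1)} (hi : i ∈ Ed k m s) :
    ∏ j ∈ (Ed k m s).erase i, pW k m (j:ℕ) = pQ k m s / pW k m (i:ℕ) := by
  have hW : 0 < pW k m (i:ℕ) := pW_pos k m _ hk hm (by omega)
  rw [eq_div_iff hW.ne', ← prod_Ed_Q k m s hk hm hs]
  exact Finset.prod_erase_mul _ _ hi
lemma pow_split (k : ℕ) (hk : 2 ≤ k) (x : ℝ) : x ^ (k-1) * x = x ^ k := by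
  rw [← pow_succ]; congr 1; omega

lemma eigen_real (k m : ℕ) (hk : 2 ≤ k) (hm : 1 ≤ m) (i : Fin (m * (k-1) + 1)) :
    ∑ s ∈ Filt k m i, ∏ j ∈ (Ed k m s).erase i, pW k m (j:ℕ)
      = pLam k m * pW k m (i:ℕ) ^ (k-1) := by
  have hK : 0 < k - 1 := by omega
  have hi : (i:ℕ) ≤ m * (k-1) := by omega
  by_cases hd : (k-1) ∣ (i:ℕ)
  · -- joint vertex
    obtain ⟨q, hq⟩ := hd
    have hq' : (i:ℕ) = q * (k-1) := hq.trans (Nat.mul_comm _ _)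
    have hqm : q ≤ m := by
      by_contra hc
      push_neg at hc
      have h1 : (m+1) * (k-1) ≤ q * (k-1) := Nat.mul_le_mul_right _ (by omega)
      have h2 : m * (k-1) + (k-1) = (m+1) * (k-1) := by ring
      omega
    have hWi : pW k m (i:ℕ) = pA k m q := by
      rw [hq', pW_joint k m q hk]
    rcases Nat.eq_zero_or_pos q with rfl | hq1
    · -- i = 0
      have hi0 : (i:ℕ) = 0 := by omega
      rw [Filt_d0 k m hk hm i hi0, Finset.sum_singleton]
      have hmem : i ∈ Ed k m 0 := by
        rw [mem_Ed, hi0]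
        exact ⟨by omega, by omega⟩
      rw [prod_erase_Ed k m 0 hk hm (by omega) hmem, hWi,
        div_eq_iff (pA_pos k m 0 (by omega)).ne', mul_assoc, pow_split k hk]
      have hkj := keyJoint k m 0 hk hm (Nat.zero_le m)
      rw [pY_zero m] at hkj
      simp only [zero_mul, mul_zero, zero_add] at hkj
      exact hkj
    · rcases Nat.lt_or_ge q m with hqm' | hqm'
      · -- interior joint 0 < q < m
        rw [Filt_dq k m q hk hm i hq' hq1 hqm', Finset.sum_pair (by omega : q - 1 ≠ q)]
        have e1 : q - 1 + 1 = q := by omega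
        have hmem1 : i ∈ Ed k m (q-1) := by
          rw [mem_Ed, hq', e1]
          exact ⟨Nat.mul_le_mul_right _ (by omega), le_rfl⟩
        have hmem2 : i ∈ Ed k m q := by
          rw [mem_Ed, hq']
          exact ⟨le_rfl, Nat.mul_le_mul_right _ (by omega)⟩
        rw [prod_erase_Ed k m (q-1) hk hm (by omega) hmem1,
          prod_erase_Ed k m q hk hm hqm' hmem2, hWi, ← add_div,
          div_eq_iff (pA_pos k m q (le_of_lt hqm')).ne', mul_assoc, pow_split k hk]
        have hkj := keyJoint k m q hk hm (le_of_lt hqm')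
        unfold pQ
        rw [e1, show q - 1 + 2 = q + 1 by omega]
        exact hkj
      · -- q = m
        have hqm2 : q = m := by omega
        rw [hqm2] at hq' hWi
        rw [Filt_dm k m hk hm i hq', Finset.sum_singleton]
        have e1 : m - 1 + 1 = m := by omega
        have hmem : i ∈ Ed k m (m-1) := by
          rw [mem_Ed, hq', e1]
          exact ⟨Nat.mul_le_mul_right _ (by omega), le_rfl⟩
        rw [prod_erase_Ed k m (m-1) hk hm (by omega) hmem, hWi,
          div_eq_iff (pA_pos k m m le_rfl).ne', mul_assoc, pow_split k hk]
        have hkj := keyJoint k m m hk hm le_rfl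
        rw [pY_top m] at hkj
        simp only [mul_zero, add_zero] at hkj
        unfold pQ
        rw [e1, show m - 1 + 2 = m + 1 by omega]
        exact hkj
  · -- interior vertex
    have hWi : pW k m (i:ℕ) = pZ k m ((i:ℕ)/(k-1)) := by
      unfold pW; rw [if_neg hd]
    have hmod := Nat.div_add_mod (i:ℕ) (k-1)
    have hrne : (i:ℕ) % (k-1) ≠ 0 := fun h => hd (Nat.dvd_of_mod_eq_zero h)
    have hrlt : (i:ℕ) % (k-1) < k-1 := Nat.mod_lt _ hK
    have hcomm : ((i:ℕ)/(k-1)) * (k-1) = (k-1) * ((i:ℕ)/(k-1)) := Nat.mul_comm _ _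
    have h1 : ((i:ℕ)/(k-1)) * (k-1) < (i:ℕ) := by omega
    have he : ((i:ℕ)/(k-1) + 1) * (k-1) = ((i:ℕ)/(k-1)) * (k-1) + (k-1) := by ring
    have h2 : (i:ℕ) < ((i:ℕ)/(k-1) + 1) * (k-1) := by omega
    have hqm : (i:ℕ)/(k-1) < m := by
      apply (Nat.div_lt_iff_lt_mul hK).2
      rcases Nat.lt_or_ge (i:ℕ) (m * (k-1)) with h | h
      · exact h
      · exact absurd (by rw [show (i:ℕ) = m * (k-1) by omega]; exact Dvd.intro_left m rfl) hd
    rw [Filt_nd k m hk hm i hd, Finset.sum_singleton,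
      prod_erase_Ed k m ((i:ℕ)/(k-1)) hk hm hqm (by rw [mem_Ed]; exact ⟨by omega, by omega⟩),
      hWi, div_eq_iff (pZ_pos k m _ hm (by omega)).ne', keyInt k m _ hk hm (by omega),
      mul_assoc, pow_split k hk]
lemma pLam_pos (k m : ℕ) (hk : 2 ≤ k) (hm : 1 ≤ m) : 0 < pLam k m :=
  Real.rpow_pos_of_pos (pmu_pos m hm) _

lemma sum_edges {M : Type*} [AddCommMonoid M] (k m : ℕ) (hk : 2 ≤ k)
    (i : Fin (m * (k-1) + 1)) (g : Finset (Fin (m * (k-1) + 1)) → M) :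
    ∑ e ∈ (hyperpathEdges k m).filter (fun e => i ∈ e), g e
      = ∑ s ∈ Filt k m i, g (Ed k m s) := by
  have h1 : hyperpathEdges k m = (Finset.range m).image (Ed k m) := rfl
  rw [h1, Finset.filter_image,
    Finset.sum_image (fun x hx y hy h =>
      Ed_injOn k m hk (by simp [Finset.mem_filter] at hx; simp [hx.1]) (by simp [Finset.mem_filter] at hy; simp [hy.1]) h)]
  rfl

lemma eigen_complex (k m : ℕ) (hk : 2 ≤ k) (hm : 1 ≤ m) (i : Fin (m * (k-1) + 1)) :
    ∑ e ∈ (hyperpathEdges k m).filter (fun e => i ∈ e),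
        ∏ j ∈ e.erase i, ((pW k m (j:ℕ) : ℝ) : ℂ)
      = ((pLam k m : ℝ) : ℂ) * ((pW k m (i:ℕ) : ℝ) : ℂ) ^ (k-1) := by
  rw [sum_edges k m hk i]
  have h := eigen_real k m hk hm i
  calc ∑ s ∈ Filt k m i, ∏ j ∈ (Ed k m s).erase i, ((pW k m (j:ℕ) : ℝ) : ℂ)
      = ((∑ s ∈ Filt k m i, ∏ j ∈ (Ed k m s).erase i, pW k m (j:ℕ) : ℝ) : ℂ) := by
        push_cast; rfl
    _ = _ := by rw [h]; push_cast; ring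

lemma lam_mem (k m : ℕ) (hk : 2 ≤ k) (hm : 1 ≤ m) :
    IsHypEigenvalue (hyperpathEdges k m) k ((pLam k m : ℝ) : ℂ) := by
  refine ⟨fun i => ((pW k m (i:ℕ) : ℝ) : ℂ), ?_, fun i => eigen_complex k m hk hm i⟩
  intro h0
  have h1 := congrFun h0 ⟨0, by omega⟩
  have h2 : 0 < pW k m 0 := pW_pos k m 0 hk hm (by omega)
  simp only [Pi.zero_apply, Complex.ofReal_eq_zero] at h1
  exact h2.ne' h1

lemma upper_bound (k m : ℕ) (hk : 2 ≤ k) (hm : 1 ≤ m) (lam : ℂ)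
    (h : IsHypEigenvalue (hyperpathEdges k m) k lam) :
    ‖lam‖ ≤ pLam k m := by
  obtain ⟨x, hx0, hx⟩ := h
  obtain ⟨i₀, -, hmax⟩ := Finset.exists_max_image (Finset.univ : Finset (Fin (m * (k-1) + 1)))
    (fun i => ‖x i‖ / pW k m (i:ℕ)) ⟨⟨0, by omega⟩, Finset.mem_univ _⟩
  have hWpos : ∀ j : Fin (m * (k-1) + 1), 0 < pW k m (j:ℕ) :=
    fun j => pW_pos k m _ hk hm (by omega)
  set c := ‖x i₀‖ / pW k m (i₀:ℕ) with hc
  have hub : ∀ j, ‖x j‖ ≤ c * pW k m (j:ℕ) := by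
    intro j
    exact (div_le_iff₀ (hWpos j)).1 (hmax j (Finset.mem_univ j))
  have hc0 : 0 < c := by
    obtain ⟨j, hj⟩ := Function.ne_iff.1 hx0
    have h1 : 0 < ‖x j‖ := by
      simpa using (norm_pos_iff).2 hj
    have h2 : 0 < ‖x j‖ / pW k m (j:ℕ) := div_pos h1 (hWpos j)
    exact lt_of_lt_of_le h2 (hmax j (Finset.mem_univ j))
  have hxi : ‖x i₀‖ = c * pW k m (i₀:ℕ) := by
    rw [hc, div_mul_cancel₀ _ (hWpos i₀).ne']
  have key := hx i₀
  have habs : ‖lam‖ * (c * pW k m (i₀:ℕ)) ^ (k-1)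
      ≤ pLam k m * (c * pW k m (i₀:ℕ)) ^ (k-1) := by
    have e1 : ‖lam‖ * (c * pW k m (i₀:ℕ)) ^ (k-1)
        = ‖lam * (x i₀) ^ (k-1)‖ := by
      rw [norm_mul, norm_pow, hxi]
    rw [e1, ← key]
    calc ‖∑ e ∈ (hyperpathEdges k m).filter (fun e => i₀ ∈ e), ∏ j ∈ e.erase i₀, x j‖
        ≤ ∑ e ∈ (hyperpathEdges k m).filter (fun e => i₀ ∈ e), ‖∏ j ∈ e.erase i₀, x j‖ :=
          norm_sum_le _ _
      _ = ∑ e ∈ (hyperpathEdges k m).filter (fun e => i₀ ∈ e), ∏ j ∈ e.erase i₀, ‖x j‖ := by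
          refine Finset.sum_congr rfl fun e _ => ?_
          exact norm_prod _ _
      _ = ∑ s ∈ Filt k m i₀, ∏ j ∈ (Ed k m s).erase i₀, ‖x j‖ :=
          sum_edges k m hk i₀ _
      _ ≤ ∑ s ∈ Filt k m i₀, ∏ j ∈ (Ed k m s).erase i₀, (c * pW k m (j:ℕ)) := by
          refine Finset.sum_le_sum fun s _ => ?_
          exact Finset.prod_le_prod (fun j _ => norm_nonneg _) (fun j _ => hub j)
      _ = ∑ s ∈ Filt k m i₀, c ^ (k-1) * ∏ j ∈ (Ed k m s).erase i₀, pW k m (j:ℕ) := by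
          refine Finset.sum_congr rfl fun s hs => ?_
          rw [Finset.prod_mul_distrib, Finset.prod_const]
          congr 2
          have hsm : s < m := by
            have := (mem_Filt).1 hs
            exact this.1
          have hi : i₀ ∈ Ed k m s := by
            have := (mem_Filt).1 hs
            rw [mem_Ed]; exact this.2
          rw [Finset.card_erase_of_mem hi, card_Ed k m s hk hsm]
      _ = c ^ (k-1) * ∑ s ∈ Filt k m i₀, ∏ j ∈ (Ed k m s).erase i₀, pW k m (j:ℕ) := by
          rw [Finset.mul_sum]
      _ = c ^ (k-1) * (pLam k m * pW k m (i₀:ℕ) ^ (k-1)) := by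
          rw [eigen_real k m hk hm i₀]
      _ = pLam k m * (c * pW k m (i₀:ℕ)) ^ (k-1) := by
          rw [mul_pow]; ring
  have hpos : 0 < (c * pW k m (i₀:ℕ)) ^ (k-1) := pow_pos (mul_pos hc0 (hWpos i₀)) _
  exact le_of_mul_le_mul_right habs hpos

lemma rho_eq (k m : ℕ) (hk : 2 ≤ k) (hm : 1 ≤ m) (ρm : ℝ)
    (hg : IsGreatest
      {r : ℝ | ∃ lam : ℂ, IsHypEigenvalue (hyperpathEdges k m) k lam ∧ r = ‖lam‖} ρm) :
    ρm = pLam k m := by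
  have hub : pLam k m ≤ ρm := by
    apply hg.2
    refine ⟨((pLam k m : ℝ) : ℂ), lam_mem k m hk hm, ?_⟩
    rw [Complex.norm_of_nonneg (pLam_pos k m hk hm).le]
  obtain ⟨lam₀, hlam₀, hr⟩ := hg.1
  have := upper_bound k m hk hm lam₀ hlam₀
  rw [← hr] at this
  linarith

/-- For `k ≥ 2`, if `ρ m` is the spectral radius of `P_m^{(k)}` for each `m ≥ 1`
(i.e. the maximum of `|λ|` over eigenvalues `λ`), then `ρ m = (2cos(π/(m+2)))^{2/k}`
for every `m ≥ 1`, and `ρ m → 4^{1/k}` as `m → ∞`. -/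
theorem stmt10 (k : ℕ) (hk : 2 ≤ k) (ρ : ℕ → ℝ)
    (hρ : ∀ m, 1 ≤ m → IsGreatest
      {r : ℝ | ∃ lam : ℂ, IsHypEigenvalue (hyperpathEdges k m) k lam ∧ r = ‖lam‖}
      (ρ m)) :
    (∀ m, 1 ≤ m → ρ m = (2 * Real.cos (Real.pi / (m + 2))) ^ ((2 : ℝ) / k)) ∧
      Filter.Tendsto ρ Filter.atTop (nhds ((4 : ℝ) ^ ((1 : ℝ) / k))) := by
  have hpart1 : ∀ m, 1 ≤ m → ρ m = (2 * Real.cos (Real.pi / (m + 2))) ^ ((2 : ℝ) / k) := by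
    intro m hm
    have := rho_eq k m hk hm (ρ m) (hρ m hm)
    rw [this]
    rfl
  refine ⟨hpart1, ?_⟩
  have h1 : Filter.Tendsto (fun m : ℕ => Real.pi / ((m:ℝ) + 2)) Filter.atTop (nhds 0) := by
    apply Filter.Tendsto.div_atTop tendsto_const_nhds
    exact Filter.tendsto_atTop_add_const_right _ 2 tendsto_natCast_atTop_atTop
  have h2 : Filter.Tendsto (fun m : ℕ => 2 * Real.cos (Real.pi / ((m:ℝ) + 2)))
      Filter.atTop (nhds 2) := by
    have hcos : Filter.Tendsto (fun m : ℕ => Real.cos (Real.pi / ((m:ℝ) + 2)))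
        Filter.atTop (nhds 1) := by
      have := (Real.continuous_cos.continuousAt (x := 0)).tendsto.comp h1
      simpa [Function.comp_def] using this
    have := hcos.const_mul (2:ℝ)
    simpa using this
  have h3 : Filter.Tendsto (fun m : ℕ => (2 * Real.cos (Real.pi / ((m:ℝ) + 2))) ^ ((2:ℝ)/k))
      Filter.atTop (nhds ((2:ℝ) ^ ((2:ℝ)/k))) :=
    h2.rpow_const (Or.inl (by norm_num))
  have h4 : (2:ℝ) ^ ((2:ℝ)/k) = (4:ℝ) ^ ((1:ℝ)/k) := by
    rw [show (4:ℝ) = (2:ℝ) ^ ((2:ℕ):ℝ) by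
        rw [Real.rpow_natCast]; norm_num,
      ← Real.rpow_mul (by norm_num : (0:ℝ) ≤ 2)]
    congr 1
    push_cast
    ring
  rw [h4] at h3
  refine h3.congr' ?_
  filter_upwards [Filter.eventually_ge_atTop 1] with m hm
  exact (hpart1 m hm).symm
end
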